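/- arXiv:2208.02627 — 9 statements merged into one kernel-verified Lean document; each statement's English description precedes it below -/
import Mathlib

section
/- Let A and B be independent nonnegative random variables on a probability space with B integrable. Then E[min(1, AB)] ≤ E[min(1, A)] − (1 − E[B])·E[A·𝟙(A < 1)], where 𝟙(A < 1) is the indicator of the event {A < 1}. -/
/-!
Pointwise, `min 1 (a * b) ≤ min 1 a - (1 - b) * a 𝟙(a < 1)`: for `a < 1` the right side is `a * b`,
and for `a ≥ 1` it is `1`. Taking expectations, independence factors `E[(1 - B) · A 𝟙(A < 1)]`
into `(1 - E[B]) · E[A 𝟙(A < 1)]`.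
-/

open MeasureTheory ProbabilityTheory

theorem min_one_mul_le_min_one_sub (a b : ℝ) :
    min 1 (a * b) ≤ min 1 a - (1 - b) * (a * if a < 1 then 1 else 0) := by
  by_cases ha : a < 1
  · rw [if_pos ha, mul_one, min_eq_right ha.le]
    linarith [min_le_right 1 (a * b)]
  · rw [if_neg ha, mul_zero, mul_zero, sub_zero, min_eq_left (not_lt.mp ha)]
    exact min_le_left 1 (a * b)

theorem abs_mul_ite_lt_one_le_one {a : ℝ} (ha : 0 ≤ a) :
    |a * if a < 1 then (1 : ℝ) else 0| ≤ 1 := by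
  split_ifs with h
  · rw [mul_one, abs_of_nonneg ha]; exact h.le
  · simp

theorem measurable_mul_ite_lt_one : Measurable fun x : ℝ => x * if x < 1 then (1 : ℝ) else 0 :=
  measurable_id.mul <| Measurable.ite measurableSet_Iio measurable_const measurable_const

theorem integrable_min_one_of_nonneg {Ω : Type*} [MeasurableSpace Ω] {μ : Measure Ω}
    [IsFiniteMeasure μ] {f : Ω → ℝ} (hf : AEStronglyMeasurable f μ) (hf0 : ∀ᵐ ω ∂μ, 0 ≤ f ω) :
    Integrable (fun ω => min 1 (f ω)) μ := by
  refine .of_bound (by fun_prop) 1 (hf0.mono fun ω h => ?_)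
  rw [Real.norm_eq_abs, abs_of_nonneg (le_min zero_le_one h)]
  exact min_le_left _ _

theorem expectation_min_one_mul_le_general
    {Ω : Type*} [MeasurableSpace Ω] (μ : Measure Ω) [IsProbabilityMeasure μ]
    (A B : Ω → ℝ) (hA : Measurable A)
    (hA0 : ∀ ω, 0 ≤ A ω) (hB0 : ∀ ω, 0 ≤ B ω)
    (hBint : Integrable B μ) (hind : IndepFun A B μ) :
    ∫ ω, min 1 (A ω * B ω) ∂μ ≤
      (∫ ω, min 1 (A ω) ∂μ) -
        (1 - ∫ ω, B ω ∂μ) * ∫ ω, A ω * (if A ω < 1 then (1 : ℝ) else 0) ∂μ := by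
  set G : Ω → ℝ := fun ω => A ω * if A ω < 1 then (1 : ℝ) else 0
  have hG : Integrable G μ :=
    .of_bound (measurable_mul_ite_lt_one.comp hA).aestronglyMeasurable 1
      (.of_forall fun ω => abs_mul_ite_lt_one_le_one (hA0 ω))
  have hindG : IndepFun (fun ω => 1 - B ω) G μ :=
    hind.symm.comp (measurable_const.sub measurable_id) measurable_mul_ite_lt_one
  have h1B : Integrable (fun ω => 1 - B ω) μ := (integrable_const 1).sub hBint
  have hE : ∫ ω, (1 - B ω) ∂μ = 1 - ∫ ω, B ω ∂μ := by
    rw [integral_sub (integrable_const 1) hBint]; simp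
  have hprod : Integrable (fun ω => (1 - B ω) * G ω) μ := hindG.integrable_mul h1B hG
  have hmin : Integrable (fun ω => min 1 (A ω)) μ :=
    integrable_min_one_of_nonneg hA.aestronglyMeasurable (.of_forall hA0)
  have hfactor : ∫ ω, (1 - B ω) * G ω ∂μ = (1 - ∫ ω, B ω ∂μ) * ∫ ω, G ω ∂μ := by
    rw [← hE]
    exact hindG.integral_mul_eq_mul_integral h1B.aestronglyMeasurable hG.aestronglyMeasurable
  calc ∫ ω, min 1 (A ω * B ω) ∂μ
      ≤ ∫ ω, (min 1 (A ω) - (1 - B ω) * G ω) ∂μ :=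
        integral_mono (integrable_min_one_of_nonneg (hA.aestronglyMeasurable.mul hBint.1)
            (.of_forall fun ω => mul_nonneg (hA0 ω) (hB0 ω)))
          (hmin.sub hprod) fun ω => min_one_mul_le_min_one_sub (A ω) (B ω)
    _ = _ := by rw [integral_sub hmin hprod, hfactor]

/-- For independent nonnegative random variables `A`, `B` with `B` integrable,
`E[min(1, A*B)] ≤ E[min(1, A)] - (1 - E[B]) * E[A * 𝟙(A < 1)]`. -/
theorem expectation_min_one_mul_le
    {Ω : Type*} [MeasurableSpace Ω] (μ : Measure Ω) [IsProbabilityMeasure μ]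
    (A B : Ω → ℝ) (hA : Measurable A) (hB : Measurable B)
    (hA0 : ∀ ω, 0 ≤ A ω) (hB0 : ∀ ω, 0 ≤ B ω)
    (hBint : Integrable B μ) (hind : IndepFun A B μ) :
    ∫ ω, min 1 (A ω * B ω) ∂μ ≤
      (∫ ω, min 1 (A ω) ∂μ) -
        (1 - ∫ ω, B ω ∂μ) * ∫ ω, A ω * (if A ω < 1 then (1 : ℝ) else 0) ∂μ :=
  expectation_min_one_mul_le_general μ A B hA hA0 hB0 hBint hind
end

section
/- Let A and B be independent nonnegative random variables on a probability space with B integrable and E[B] ≤ 1. If P({A > 1 and AB < 1} ∪ {A < 1 and AB > 1}) > 0, then the strict inequality E[min(1, AB)] < E[min(1, A)] holds. -/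
open MeasureTheory ProbabilityTheory Set

/-! Pointwise, `min 1 (a * b) ≤ min 1 a - (1 - b) * a 𝟙(a < 1)`, strictly when `1` lies strictly
between `a` and `a * b`. Taking expectations, independence factors the correction term as
`E[A 𝟙(A < 1)] * (1 - E[B]) ≥ 0`, and the strict pointwise inequality on an event of positive
probability makes the inequality of expectations strict. -/

lemma min_one_mul_le_sub_indicator (x y : ℝ) :
    min 1 (x * y) ≤ min 1 x - (1 - y) * (Iio 1).indicator id x := by
  by_cases hx : x < 1
  · simp only [indicator_of_mem (mem_Iio.2 hx), id, min_eq_right hx.le]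
    linarith [min_le_right 1 (x * y)]
  · simp only [indicator_of_notMem (notMem_Iio.2 (not_lt.1 hx)), mul_zero, sub_zero,
      min_eq_left (not_lt.1 hx), min_le_left]

lemma min_one_mul_lt_sub_indicator {x y : ℝ}
    (h : (1 < x ∧ x * y < 1) ∨ (x < 1 ∧ 1 < x * y)) :
    min 1 (x * y) < min 1 x - (1 - y) * (Iio 1).indicator id x := by
  rcases h with ⟨hx, hxy⟩ | ⟨hx, hxy⟩
  · simpa [indicator_of_notMem (notMem_Iio.2 hx.le), min_eq_left hx.le, min_eq_right hxy.le]
      using hxy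
  · simp only [indicator_of_mem (mem_Iio.2 hx), id, min_eq_right hx.le, min_eq_left hxy.le]
    linarith

lemma integral_lt_integral_of_le_of_measure_pos {α : Type*} [MeasurableSpace α]
    {μ : Measure α} {f g : α → ℝ} {s : Set α} (hf : Integrable f μ) (hg : Integrable g μ)
    (hle : f ≤ g) (hs : 0 < μ s) (hlt : ∀ x ∈ s, f x < g x) :
    ∫ x, f x ∂μ < ∫ x, g x ∂μ := by
  have hpos : 0 < ∫ x, (g - f) x ∂μ := by
    refine (integral_pos_iff_support_of_nonneg (fun x ↦ sub_nonneg.2 (hle x)) (hg.sub hf)).2 ?_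
    exact hs.trans_le (measure_mono fun x hx ↦ (sub_pos.2 (hlt x hx)).ne')
  rw [Pi.sub_def, integral_sub hg hf] at hpos
  linarith

section

variable {Ω : Type*} [MeasurableSpace Ω] {μ : Measure Ω}

lemma integrable_min_one_of_nonneg_s3 [IsFiniteMeasure μ] {X : Ω → ℝ} (hX : Measurable X)
    (hX0 : ∀ ω, 0 ≤ X ω) : Integrable (fun ω ↦ min 1 (X ω)) μ :=
  .of_bound (measurable_const.min hX).aestronglyMeasurable 1 <| .of_forall fun ω ↦ by
    rw [Real.norm_of_nonneg (le_min zero_le_one (hX0 ω))]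
    exact min_le_left _ _

lemma integrable_one_sub_mul_indicator [IsFiniteMeasure μ] {A B : Ω → ℝ} (hA : Measurable A)
    (hA0 : ∀ ω, 0 ≤ A ω) (hBint : Integrable B μ) :
    Integrable (fun ω ↦ (1 - B ω) * (Iio 1).indicator id (A ω)) μ := by
  refine ((integrable_const 1).sub hBint).mul_bdd (c := 1)
    ((measurable_id.indicator measurableSet_Iio).comp hA).aestronglyMeasurable (.of_forall ?_)
  intro ω
  rw [Real.norm_of_nonneg (indicator_apply_nonneg (f := id) fun _ ↦ hA0 ω)]
  exact indicator_apply_le' (fun h ↦ (mem_Iio.1 h).le) fun _ ↦ zero_le_one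

lemma integral_one_sub_mul_indicator_nonneg [IsProbabilityMeasure μ] {A B : Ω → ℝ}
    (hA : Measurable A) (hB : Measurable B) (hA0 : ∀ ω, 0 ≤ A ω) (hBint : Integrable B μ)
    (hEB : ∫ ω, B ω ∂μ ≤ 1) (hind : IndepFun A B μ) :
    0 ≤ ∫ ω, (1 - B ω) * (Iio 1).indicator id (A ω) ∂μ := by
  have hφ : Measurable ((Iio 1).indicator (id : ℝ → ℝ)) := measurable_id.indicator measurableSet_Iio
  have hψ : Measurable fun x : ℝ ↦ 1 - x := measurable_const.sub measurable_id
  have hfactor := (hind.comp hφ hψ).symm.integral_mul_eq_mul_integral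
    (hψ.comp hB).aestronglyMeasurable (hφ.comp hA).aestronglyMeasurable
  have hEφ : 0 ≤ ∫ ω, (Iio 1).indicator id (A ω) ∂μ :=
    integral_nonneg fun ω ↦ indicator_apply_nonneg fun _ ↦ hA0 ω
  have hEψ : ∫ ω, (1 - B ω) ∂μ = 1 - ∫ ω, B ω ∂μ := by
    simp [integral_sub (integrable_const 1) hBint]
  simp only [Pi.mul_def, Function.comp_def, hEψ] at hfactor
  rw [hfactor]
  exact mul_nonneg (sub_nonneg.2 hEB) hEφ

end

/-- Strict version: for independent nonnegative random variables `A`, `B` with `B`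
integrable and `E[B] ≤ 1`, if `P(A > 1 > AB or A < 1 < AB) > 0` then
`E[min(1, A*B)] < E[min(1, A)]`. -/
theorem expectation_min_one_mul_lt_of_expectation_le_one
    {Ω : Type*} [MeasurableSpace Ω] (μ : Measure Ω) [IsProbabilityMeasure μ]
    (A B : Ω → ℝ) (hA : Measurable A) (hB : Measurable B)
    (hA0 : ∀ ω, 0 ≤ A ω) (hB0 : ∀ ω, 0 ≤ B ω)
    (hBint : Integrable B μ) (hEB : ∫ ω, B ω ∂μ ≤ 1)
    (hind : IndepFun A B μ)
    (hpos : 0 < μ {ω | (1 < A ω ∧ A ω * B ω < 1) ∨ (A ω < 1 ∧ 1 < A ω * B ω)}) :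
    ∫ ω, min 1 (A ω * B ω) ∂μ < ∫ ω, min 1 (A ω) ∂μ := by
  have hAint := integrable_min_one_of_nonneg_s3 (μ := μ) hA hA0
  have hCint := integrable_one_sub_mul_indicator (μ := μ) hA hA0 hBint
  calc ∫ ω, min 1 (A ω * B ω) ∂μ
      < ∫ ω, (min 1 (A ω) - (1 - B ω) * (Iio 1).indicator id (A ω)) ∂μ :=
        integral_lt_integral_of_le_of_measure_pos
          (integrable_min_one_of_nonneg_s3 (hA.mul hB) fun ω ↦ mul_nonneg (hA0 ω) (hB0 ω))
          (hAint.sub hCint) (fun ω ↦ min_one_mul_le_sub_indicator _ _) hpos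
          fun _ hω ↦ min_one_mul_lt_sub_indicator hω
    _ = ∫ ω, min 1 (A ω) ∂μ - ∫ ω, (1 - B ω) * (Iio 1).indicator id (A ω) ∂μ :=
        integral_sub hAint hCint
    _ ≤ ∫ ω, min 1 (A ω) ∂μ :=
        sub_le_self _ (integral_one_sub_mul_indicator_nonneg hA hB hA0 hBint hEB hind)
end

section
/- Let I be a nonempty finite index set and let (M_i)_{i∈I} be mutually independent nonnegative integrable random variables on a probability space with E[M_i] ≤ 1 for every i ∈ I. Then ∏_{i∈I} E[min(1, M_i)] ≤ E[min(1, ∏_{i∈I} M_i)] ≤ min_{i∈I} E[min(1, M_i)]. -/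
/-!
The lower bound holds pointwise before taking expectations: for nonnegative reals,
`∏ min 1 xᵢ ≤ min 1 (∏ xᵢ)`, and independence turns the expectation of the left side into
`∏ E[min 1 Mᵢ]`.

For the upper bound fix `j` and write `∏ Mᵢ = Mⱼ * P` with `P = ∏_{i ≠ j} Mᵢ`, which is independent
of `Mⱼ` and has `E[P] = ∏_{i ≠ j} E[Mᵢ] ≤ 1`. Splitting `min 1 x = x 𝟙{x ≤ 1} + 𝟙{x > 1}` gives
`min 1 (Mⱼ P) ≤ Mⱼ 𝟙{Mⱼ ≤ 1} P + 𝟙{Mⱼ > 1}`, and independence factors the expectation of the first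
term as `E[Mⱼ 𝟙{Mⱼ ≤ 1}] E[P] ≤ E[Mⱼ 𝟙{Mⱼ ≤ 1}]`.
-/

open MeasureTheory ProbabilityTheory

theorem Finset.prod_min_one_le_min_one_prod {ι R : Type*} [CommSemiring R] [LinearOrder R]
    [IsOrderedRing R] {s : Finset ι} {f : ι → R} (hf : ∀ i ∈ s, 0 ≤ f i) :
    ∏ i ∈ s, min 1 (f i) ≤ min 1 (∏ i ∈ s, f i) :=
  le_min (Finset.prod_le_one (fun i hi ↦ le_min zero_le_one (hf i hi)) fun _ _ ↦ min_le_left _ _)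
    (Finset.prod_le_prod (fun i hi ↦ le_min zero_le_one (hf i hi)) fun _ _ ↦ min_le_right _ _)

theorem min_one_mul_le_indicator_mul_add_indicator (x y : ℝ) :
    min 1 (x * y) ≤ (Set.Iic 1).indicator id x * y + (Set.Ioi 1).indicator 1 x := by
  by_cases hx : x ≤ 1
  · simp [hx]
  · simp [hx, not_le.mp hx]

theorem indicator_Iic_add_indicator_Ioi_eq_min_one (x : ℝ) :
    (Set.Iic 1).indicator id x + (Set.Ioi 1).indicator 1 x = min 1 x := by
  by_cases hx : x ≤ 1
  · simp [hx]
  · simp [hx, not_le.mp hx, (not_le.mp hx).le]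

theorem MeasureTheory.integrable_min_one {Ω : Type*} {mΩ : MeasurableSpace Ω} {μ : Measure Ω}
    [IsFiniteMeasure μ] {f : Ω → ℝ} (hf : AEStronglyMeasurable f μ)
    (hf0 : ∀ᵐ ω ∂μ, 0 ≤ f ω) : Integrable (fun ω ↦ min 1 (f ω)) μ :=
  .of_bound (aestronglyMeasurable_const.inf hf) 1 <| hf0.mono fun ω hω ↦ by
    rw [Real.norm_of_nonneg (le_min zero_le_one hω)]
    exact min_le_left _ _

namespace ProbabilityTheory

variable {Ω : Type*} {mΩ : MeasurableSpace Ω} {μ : Measure Ω}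

section FinsetProd

variable {ι 𝕜 : Type*} [RCLike 𝕜] {X : ι → Ω → 𝕜}

theorem iIndepFun.integrable_finset_prod (hX : iIndepFun X μ) (hmeas : ∀ i, AEMeasurable (X i) μ)
    (hint : ∀ i, Integrable (X i) μ) (s : Finset ι) :
    Integrable (fun ω ↦ ∏ i ∈ s, X i ω) μ := by
  classical
  have := hX.isProbabilityMeasure
  induction s using Finset.induction_on with
  | empty => simp
  | insert a s ha ih =>
    simp_rw [Finset.prod_insert ha]
    have hindep := (hX.indepFun_finsetProd_of_notMem₀ hmeas ha).symm
    rw [Finset.prod_fn] at hindep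
    exact hindep.integrable_mul (hint a) ih

theorem iIndepFun.integral_finset_prod_eq_prod_integral (hX : iIndepFun X μ)
    (hmeas : ∀ i, AEStronglyMeasurable (X i) μ) (s : Finset ι) :
    ∫ ω, ∏ i ∈ s, X i ω ∂μ = ∏ i ∈ s, ∫ ω, X i ω ∂μ := by
  simp_rw [← Finset.prod_coe_sort s]
  exact (hX.precomp Subtype.val_injective (g := ((↑) : s → ι))).integral_fun_prod_eq_prod_integral
      fun i ↦ hmeas i

end FinsetProd

theorem IndepFun.integral_min_one_mul_le [IsFiniteMeasure μ] {X Y : Ω → ℝ} (hXY : IndepFun X Y μ)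
    (hX : AEMeasurable X μ) (hX0 : ∀ᵐ ω ∂μ, 0 ≤ X ω) (hY0 : ∀ᵐ ω ∂μ, 0 ≤ Y ω) (hY : Integrable Y μ)
    (hEY : ∫ ω, Y ω ∂μ ≤ 1) :
    ∫ ω, min 1 (X ω * Y ω) ∂μ ≤ ∫ ω, min 1 (X ω) ∂μ := by
  set g : ℝ → ℝ := (Set.Iic 1).indicator id
  set h : ℝ → ℝ := (Set.Ioi 1).indicator 1
  have hg : Measurable g := measurable_id.indicator measurableSet_Iic
  have hh : Measurable h := measurable_const.indicator measurableSet_Ioi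
  have hgXY : IndepFun (fun ω ↦ g (X ω)) Y μ := hXY.comp hg measurable_id
  have hgX : Integrable (fun ω ↦ g (X ω)) μ := by
    refine .of_bound (hg.comp_aemeasurable hX).aestronglyMeasurable 1 (hX0.mono fun ω hω ↦ ?_)
    by_cases hx : X ω ≤ 1 <;> simp [g, hx, abs_of_nonneg hω]
  have hgXYint : Integrable (fun ω ↦ g (X ω) * Y ω) μ := hgXY.integrable_mul hgX hY
  have hhX : Integrable (fun ω ↦ h (X ω)) μ :=
    .of_bound (hh.comp_aemeasurable hX).aestronglyMeasurable 1 (ae_of_all _ fun ω ↦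
      (norm_indicator_le_norm_self _ _).trans norm_one.le)
  calc ∫ ω, min 1 (X ω * Y ω) ∂μ ≤ ∫ ω, g (X ω) * Y ω + h (X ω) ∂μ :=
        integral_mono_of_nonneg
          (by filter_upwards [hX0, hY0] with ω hx hy using le_min zero_le_one (mul_nonneg hx hy))
          (hgXYint.add hhX)
          (ae_of_all _ fun ω ↦ min_one_mul_le_indicator_mul_add_indicator _ _)
    _ = (∫ ω, g (X ω) ∂μ) * (∫ ω, Y ω ∂μ) + ∫ ω, h (X ω) ∂μ := by
        rw [integral_add hgXYint hhX,
          hgXY.integral_fun_mul_eq_mul_integral hgX.aestronglyMeasurable hY.aestronglyMeasurable]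
    _ ≤ (∫ ω, g (X ω) ∂μ) + ∫ ω, h (X ω) ∂μ := by
        gcongr
        exact mul_le_of_le_one_right (integral_nonneg_of_ae <| hX0.mono fun ω hω ↦ by
          by_cases hx : X ω ≤ 1 <;> simp [g, hx, hω]) hEY
    _ = ∫ ω, min 1 (X ω) ∂μ := by
        rw [← integral_add hgX hhX]
        simp only [g, h, indicator_Iic_add_indicator_Ioi_eq_min_one]

section MinOne

variable {ι : Type*} [Fintype ι] {X : ι → Ω → ℝ}

theorem iIndepFun.prod_integral_min_one_le (hX : iIndepFun X μ) (hmeas : ∀ i, AEMeasurable (X i) μ)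
    (hX0 : ∀ i, ∀ᵐ ω ∂μ, 0 ≤ X i ω) :
    ∏ i, ∫ ω, min 1 (X i ω) ∂μ ≤ ∫ ω, min 1 (∏ i, X i ω) ∂μ := by
  have := hX.isProbabilityMeasure
  have hX0' : ∀ᵐ ω ∂μ, ∀ i, 0 ≤ X i ω := ae_all_iff.mpr hX0
  calc ∏ i, ∫ ω, min 1 (X i ω) ∂μ = ∫ ω, ∏ i, min 1 (X i ω) ∂μ :=
        ((hX.comp _ fun _ ↦ measurable_const.min measurable_id).integral_fun_prod_eq_prod_integral
          fun i ↦ (measurable_const.min measurable_id).comp_aemeasurable (hmeas i)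
            |>.aestronglyMeasurable).symm
    _ ≤ ∫ ω, min 1 (∏ i, X i ω) ∂μ :=
        integral_mono_of_nonneg
          (hX0'.mono fun ω hω ↦ Finset.prod_nonneg fun i _ ↦ le_min zero_le_one (hω i))
          (integrable_min_one (Finset.aemeasurable_fun_prod _ fun i _ ↦ hmeas i).aestronglyMeasurable
            (hX0'.mono fun ω hω ↦ Finset.prod_nonneg fun i _ ↦ hω i))
          (hX0'.mono fun ω hω ↦ Finset.prod_min_one_le_min_one_prod fun i _ ↦ hω i)

theorem iIndepFun.integral_min_one_prod_le (hX : iIndepFun X μ) (hmeas : ∀ i, AEMeasurable (X i) μ)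
    (hX0 : ∀ i, ∀ᵐ ω ∂μ, 0 ≤ X i ω) (hint : ∀ i, Integrable (X i) μ)
    (hE : ∀ i, ∫ ω, X i ω ∂μ ≤ 1) (j : ι) :
    ∫ ω, min 1 (∏ i, X i ω) ∂μ ≤ ∫ ω, min 1 (X j ω) ∂μ := by
  classical
  have := hX.isProbabilityMeasure
  have hindep : IndepFun (X j) (fun ω ↦ ∏ i ∈ Finset.univ.erase j, X i ω) μ := by
    have h := (hX.indepFun_finsetProd_of_notMem₀ hmeas (Finset.notMem_erase j Finset.univ)).symm
    rwa [Finset.prod_fn] at h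
  simp_rw [← Finset.mul_prod_erase _ _ (Finset.mem_univ j)]
  refine hindep.integral_min_one_mul_le (hmeas j) (hX0 j)
    ((ae_all_iff.mpr hX0).mono fun ω hω ↦ Finset.prod_nonneg fun i _ ↦ hω i)
    (hX.integrable_finset_prod hmeas hint _) ?_
  rw [hX.integral_finset_prod_eq_prod_integral fun i ↦ (hmeas i).aestronglyMeasurable]
  exact Finset.prod_le_one (fun i _ ↦ integral_nonneg_of_ae (hX0 i)) fun i _ ↦ hE i

end MinOne

end ProbabilityTheory

theorem prod_min_one_expectation_bounds_general
    {Ω : Type*} [MeasurableSpace Ω] (μ : Measure Ω)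
    {I : Type*} [Fintype I] [Nonempty I]
    (M : I → Ω → ℝ) (hmeas : ∀ i, Measurable (M i))
    (hnonneg : ∀ i ω, 0 ≤ M i ω) (hint : ∀ i, Integrable (M i) μ)
    (hE : ∀ i, ∫ ω, M i ω ∂μ ≤ 1)
    (hind : iIndepFun M μ) :
    (∏ i, ∫ ω, min 1 (M i ω) ∂μ) ≤ ∫ ω, min 1 (∏ i, M i ω) ∂μ ∧
      ∫ ω, min 1 (∏ i, M i ω) ∂μ ≤
        Finset.univ.inf' Finset.univ_nonempty (fun i => ∫ ω, min 1 (M i ω) ∂μ) := by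
  have hmeas' : ∀ i, AEMeasurable (M i) μ := fun i ↦ (hmeas i).aemeasurable
  have hnonneg' : ∀ i, ∀ᵐ ω ∂μ, 0 ≤ M i ω := fun i ↦ ae_of_all _ (hnonneg i)
  exact ⟨hind.prod_integral_min_one_le hmeas' hnonneg',
    Finset.le_inf' _ _ fun j _ ↦ hind.integral_min_one_prod_le hmeas' hnonneg' hint hE j⟩

/-- For mutually independent nonnegative integrable random variables `M i` with
`E[M i] ≤ 1`, one has
`∏ i, E[min(1, M i)] ≤ E[min(1, ∏ i, M i)] ≤ min_i E[min(1, M i)]`. -/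
theorem prod_min_one_expectation_bounds
    {Ω : Type*} [MeasurableSpace Ω] (μ : Measure Ω) [IsProbabilityMeasure μ]
    {I : Type*} [Fintype I] [Nonempty I]
    (M : I → Ω → ℝ) (hmeas : ∀ i, Measurable (M i))
    (hnonneg : ∀ i ω, 0 ≤ M i ω) (hint : ∀ i, Integrable (M i) μ)
    (hE : ∀ i, ∫ ω, M i ω ∂μ ≤ 1)
    (hind : iIndepFun M μ) :
    (∏ i, ∫ ω, min 1 (M i ω) ∂μ) ≤ ∫ ω, min 1 (∏ i, M i ω) ∂μ ∧
      ∫ ω, min 1 (∏ i, M i ω) ∂μ ≤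
        Finset.univ.inf' Finset.univ_nonempty (fun i => ∫ ω, min 1 (M i ω) ∂μ) :=
  prod_min_one_expectation_bounds_general μ M hmeas hnonneg hint hE hind
end

section
/- Let W be a unit-Pareto random variable, i.e. P(W > w) = 1/w for all w ≥ 1 and P(W ≥ 1) = 1, and let B be a nonnegative random variable independent of W on the same probability space. Then P(W·B ≤ 1) = E[max(0, 1 − B)]. In particular, if B is integrable then P(W·B ≤ 1) = E[max(1, B)] − E[B]. -/
open MeasureTheory ProbabilityTheory

/-- If `W` is unit-Pareto (`P(W > w) = 1/w` for `w ≥ 1`, `W ≥ 1` a.s.) and `B` is a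
nonnegative random variable independent of `W`, then
`P(W * B ≤ 1) = E[max 0 (1 - B)]`; in particular, if `B` is integrable,
`P(W * B ≤ 1) = E[max 1 B] - E[B]`. -/
theorem pareto_mul_le_one_prob
    {Ω : Type*} [MeasurableSpace Ω] (μ : Measure Ω) [IsProbabilityMeasure μ]
    (W B : Ω → ℝ) (hW : Measurable W) (hB : Measurable B)
    (hWtail : ∀ w : ℝ, 1 ≤ w → μ {ω | w < W ω} = ENNReal.ofReal (1 / w))
    (hWone : μ {ω | 1 ≤ W ω} = 1)
    (hB0 : ∀ ω, 0 ≤ B ω)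
    (hind : IndepFun W B μ) :
    (μ {ω | W ω * B ω ≤ 1}).toReal = ∫ ω, max 0 (1 - B ω) ∂μ ∧
      (Integrable B μ →
        (μ {ω | W ω * B ω ≤ 1}).toReal = (∫ ω, max 1 (B ω) ∂μ) - ∫ ω, B ω ∂μ) := by
  have hμW : IsProbabilityMeasure (μ.map W) := Measure.isProbabilityMeasure_map hW.aemeasurable
  have hμB : IsProbabilityMeasure (μ.map B) := Measure.isProbabilityMeasure_map hB.aemeasurable
  -- μ.map W gives measure 0 to {w < 1}
  have hWlt : μ.map W {w | w < 1} = 0 := by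
    have : ({w : ℝ | w < 1} : Set ℝ) = Set.Iio 1 := rfl
    rw [this, Measure.map_apply hW measurableSet_Iio]
    have hset : W ⁻¹' Set.Iio 1 = {ω | 1 ≤ W ω}ᶜ := by
      ext ω; simp [not_le]
    rw [hset, measure_compl (show MeasurableSet {ω | 1 ≤ W ω} from hW measurableSet_Ici)
      (measure_ne_top _ _), measure_univ, hWone, tsub_self]
  have hWtail' : ∀ c : ℝ, 1 ≤ c → μ.map W {w | c < w} = ENNReal.ofReal (1 / c) := by
    intro c hc
    have : ({w : ℝ | c < w} : Set ℝ) = Set.Ioi c := rfl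
    rw [this, Measure.map_apply hW measurableSet_Ioi]
    exact hWtail c hc
  -- key slice computation
  have key : ∀ b : ℝ, 0 ≤ b →
      (μ.map W) {w | w * b ≤ 1} = ENNReal.ofReal (max 0 (1 - b)) := by
    intro b hb
    rcases eq_or_lt_of_le hb with h0 | h0
    · have : b = 0 := h0.symm
      subst this
      have : ({w : ℝ | w * 0 ≤ 1} : Set ℝ) = Set.univ := by
        ext w; simp
      rw [this, measure_univ]
      norm_num
    · by_cases h1 : b ≤ 1
      · have hinv : (1 : ℝ) ≤ 1 / b := by
          rw [le_div_iff₀ h0]; linarith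
        have hset : {w : ℝ | w * b ≤ 1} = {w | 1 / b < w}ᶜ := by
          ext w
          simp only [Set.mem_setOf_eq, Set.mem_compl_iff, not_lt]
          exact (le_div_iff₀ h0).symm
        have hIoi : ({w : ℝ | 1 / b < w} : Set ℝ) = Set.Ioi (1 / b) := rfl
        rw [hset, hIoi, measure_compl measurableSet_Ioi (measure_ne_top _ _),
          measure_univ, ← hIoi, hWtail' (1 / b) hinv]
        rw [one_div_one_div]
        have hmax : max 0 (1 - b) = 1 - b := max_eq_right (by linarith)
        rw [hmax]
        rw [← ENNReal.ofReal_one, ← ENNReal.ofReal_sub _ hb]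
      · have hsub : {w : ℝ | w * b ≤ 1} ⊆ {w | w < 1} := by
          intro w hw
          simp only [Set.mem_setOf_eq] at hw ⊢
          nlinarith
        have h0' : (μ.map W) {w | w * b ≤ 1} = 0 :=
          measure_mono_null hsub hWlt
        rw [h0']
        have : max 0 (1 - b) = 0 := max_eq_left (by linarith)
        rw [this, ENNReal.ofReal_zero]
  -- main computation via the product measure
  have hs : MeasurableSet {p : ℝ × ℝ | p.1 * p.2 ≤ 1} :=
    measurableSet_le (measurable_fst.mul measurable_snd) measurable_const
  have hmap : μ.map (fun ω => (W ω, B ω)) = (μ.map W).prod (μ.map B) :=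
    (indepFun_iff_map_prod_eq_prod_map_map hW.aemeasurable hB.aemeasurable).mp hind
  have h1 : μ {ω | W ω * B ω ≤ 1}
      = ∫⁻ b, (μ.map W) {w | w * b ≤ 1} ∂(μ.map B) := by
    calc μ {ω | W ω * B ω ≤ 1}
        = μ.map (fun ω => (W ω, B ω)) {p : ℝ × ℝ | p.1 * p.2 ≤ 1} := by
          rw [Measure.map_apply (hW.prodMk hB) hs]; rfl
      _ = (μ.map W).prod (μ.map B) {p : ℝ × ℝ | p.1 * p.2 ≤ 1} := by rw [hmap]
      _ = ∫⁻ b, (μ.map W) ((fun w => (w, b)) ⁻¹' {p : ℝ × ℝ | p.1 * p.2 ≤ 1})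
            ∂(μ.map B) := Measure.prod_apply_symm hs
      _ = ∫⁻ b, (μ.map W) {w | w * b ≤ 1} ∂(μ.map B) := rfl
  have haeb : ∀ᵐ b ∂(μ.map B), 0 ≤ b := by
    rw [ae_map_iff hB.aemeasurable measurableSet_Ici]
    exact ae_of_all _ hB0
  have h2 : ∫⁻ b, (μ.map W) {w | w * b ≤ 1} ∂(μ.map B)
      = ∫⁻ b, ENNReal.ofReal (max 0 (1 - b)) ∂(μ.map B) := by
    refine lintegral_congr_ae ?_
    filter_upwards [haeb] with b hb
    exact key b hb
  have h3 : ∫⁻ b, ENNReal.ofReal (max 0 (1 - b)) ∂(μ.map B)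
      = ∫⁻ ω, ENNReal.ofReal (max 0 (1 - B ω)) ∂μ := by
    exact lintegral_map (ENNReal.measurable_ofReal.comp
      (measurable_const.max (measurable_const.sub measurable_id))) hB
  have hmeas : Measurable fun ω => max 0 (1 - B ω) :=
    measurable_const.max (measurable_const.sub hB)
  have h4 : ∫ ω, max 0 (1 - B ω) ∂μ
      = (∫⁻ ω, ENNReal.ofReal (max 0 (1 - B ω)) ∂μ).toReal :=
    integral_eq_lintegral_of_nonneg_ae (ae_of_all _ fun ω => le_max_left _ _)
      hmeas.aestronglyMeasurable
  have hfirst : (μ {ω | W ω * B ω ≤ 1}).toReal = ∫ ω, max 0 (1 - B ω) ∂μ := by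
    rw [h1, h2, h3, h4]
  refine ⟨hfirst, fun hBint => ?_⟩
  have hmaxint : Integrable (fun ω => max 1 (B ω)) μ :=
    (integrable_const (1 : ℝ)).sup hBint
  have heq : ∀ ω, max 0 (1 - B ω) = max 1 (B ω) - B ω := by
    intro ω
    rcases le_total (B ω) 1 with h | h
    · rw [max_eq_right (by linarith), max_eq_left h]
    · rw [max_eq_left (by linarith), max_eq_right h]; ring
  rw [hfirst]
  calc ∫ ω, max 0 (1 - B ω) ∂μ
      = ∫ ω, (max 1 (B ω) - B ω) ∂μ := by simp_rw [heq]
    _ = (∫ ω, max 1 (B ω) ∂μ) - ∫ ω, B ω ∂μ := integral_sub hmaxint hBint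
end

section
/- Let V be a finite vertex set, let T = (V, E) be a tree on V, and let λ : V × V → ℝ be a symmetric weight function such that for every triple of distinct vertices a, u, b ∈ V with u an internal vertex of the unique path in T from a to b, one has λ(a, b) ≤ min(λ(a, u), λ(u, b)). Then for every tree T′ = (V, E′) on V, the sum of the weights λ over the edges of T is at least the sum of the weights λ over the edges of T′, i.e. Σ_{{u,v}∈E} λ(u, v) ≥ Σ_{{u′,v′}∈E′} λ(u′, v′). -/
/-!
Exchange argument. If a tree `G` differs from `T`, pick an edge `xy` of `G` that is not in `T`.
Deleting `xy` splits `G` into two components, and the `T`-path from `x` to `y` crosses between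
them along some edge `ab`; then `G - xy + ab` is again a tree, with one more edge in common
with `T`. Applying the path condition one vertex at a time along the `T`-path from `x` to `y`
gives `w x y ≤ w a b`, so the exchange does not decrease the weight.
-/

open Finset

namespace SimpleGraph

variable {V α : Type*} {G T : SimpleGraph V} {u v x y a b : V}

def DominatedAlongPaths [LinearOrder α] (G : SimpleGraph V) (f : Sym2 V → α) : Prop :=
  ∀ a u b : V, a ≠ u → u ≠ b → a ≠ b → ∀ p : G.Walk a b, p.IsPath → u ∈ p.support →
    f s(a, b) ≤ min (f s(a, u)) (f s(u, b))

theorem Walk.IsPath.le_apply_edge_of_mem_darts [LinearOrder α] {f : Sym2 V → α}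
    (hf : G.DominatedAlongPaths f) {p : G.Walk u v} (hp : p.IsPath) {d : G.Dart}
    (hd : d ∈ p.darts) : f s(u, v) ≤ f d.edge := by
  induction p with
  | nil => simp at hd
  | @cons u c v h q ih =>
    obtain ⟨hq, hu⟩ := (Walk.cons_isPath_iff h q).mp hp
    rcases eq_or_ne c v with rfl | hcv
    · obtain rfl := (Walk.isPath_iff_nil.mp hq).eq_nil
      simp_all
    have hsplit := hf u c v h.ne hcv (fun huv => hu (huv ▸ q.end_mem_support)) _ hp (by simp)
    rw [Walk.darts_cons, List.mem_cons] at hd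
    rcases hd with rfl | hd
    · exact hsplit.trans (min_le_left _ _)
    · exact (hsplit.trans (min_le_right _ _)).trans (ih hq hd)

theorem Walk.exists_mem_darts_not_reachable {H : SimpleGraph V} (p : G.Walk u v)
    (h : ¬H.Reachable u v) : ∃ d ∈ p.darts, ¬H.Reachable d.fst d.snd := by
  obtain ⟨d, hd, hfst, hsnd⟩ := p.exists_boundary_dart {w | H.Reachable u w} .rfl h
  exact ⟨d, hd, fun hr => hsnd (Reachable.trans hfst hr)⟩

theorem IsAcyclic.isTree_of_card_edgeSet [Finite V] [Nonempty V] (hG : G.IsAcyclic)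
    (hcard : Nat.card G.edgeSet + 1 = Nat.card V) : G.IsTree := by
  obtain ⟨F, hGF, -, hF⟩ := connected_top.exists_isTree_le_of_le_of_isAcyclic le_top hG
  have hF_card := (isTree_iff_connected_and_card.mp hF).2
  have : G.edgeSet = F.edgeSet := by
    refine Set.eq_of_subset_of_ncard_le (edgeSet_mono hGF) ?_ (Set.toFinite _)
    simp only [← Nat.card_coe_set_eq]
    omega
  rwa [edgeSet_inj.mp this]

theorem edgeSet_deleteEdges_sup_edge (e : Sym2 V) (hab : a ≠ b) :
    (G.deleteEdges {e} ⊔ edge a b).edgeSet = insert s(a, b) (G.edgeSet \ {e}) := by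
  rw [edgeSet_sup, edgeSet_deleteEdges, edgeSet_edge_of_ne hab, Set.union_singleton]

theorem IsTree.isTree_deleteEdges_sup_edge [Finite V] (hG : G.IsTree) (hxy : G.Adj x y)
    (hab : a ≠ b) (hr : ¬(G.deleteEdges {s(x, y)}).Reachable a b) :
    (G.deleteEdges {s(x, y)} ⊔ edge a b).IsTree := by
  have : Nonempty V := ⟨a⟩
  refine ((hG.isAcyclic.anti (deleteEdges_le _)).sup_edge_of_not_reachable hr)
    |>.isTree_of_card_edgeSet ?_
  have hab' : s(a, b) ∉ G.edgeSet \ {s(x, y)} := fun h =>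
    hr (Adj.reachable (by simpa [edgeSet_deleteEdges] using h))
  rw [edgeSet_deleteEdges_sup_edge _ hab, Nat.card_coe_set_eq,
    Set.ncard_insert_of_notMem hab' (Set.toFinite _),
    Set.ncard_sdiff_singleton_add_one (G.mem_edgeSet.mpr hxy) (Set.toFinite _),
    ← Nat.card_coe_set_eq]
  exact (isTree_iff_connected_and_card.mp hG).2

theorem edgeFinset_deleteEdges_sup_edge [DecidableEq V] (e : Sym2 V) [Fintype G.edgeSet]
    [Fintype (G.deleteEdges {e} ⊔ edge a b).edgeSet] (hab : a ≠ b) :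
    (G.deleteEdges {e} ⊔ edge a b).edgeFinset = insert s(a, b) (G.edgeFinset.erase e) := by
  ext e'
  simp [edgeSet_deleteEdges_sup_edge e hab, and_comm]

theorem IsTree.exists_exchange [LinearOrder α] {f : Sym2 V → α} (hT : T.IsTree)
    (hf : T.DominatedAlongPaths f) (hG : G.IsAcyclic) (hxy : G.Adj x y) :
    ∃ a b, T.Adj a b ∧ f s(x, y) ≤ f s(a, b) ∧ ¬(G.deleteEdges {s(x, y)}).Reachable a b := by
  obtain ⟨p, hp, -⟩ := hT.existsUnique_path x y
  have hbridge := isAcyclic_iff_forall_adj_isBridge.mp hG hxy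
  obtain ⟨d, hd, hr⟩ := p.exists_mem_darts_not_reachable (isBridge_iff.mp hbridge)
  exact ⟨d.fst, d.snd, d.adj, hp.le_apply_edge_of_mem_darts hf hd, hr⟩

theorem IsTree.sum_edgeFinset_le [Fintype V] [AddCommMonoid α] [LinearOrder α]
    [IsOrderedAddMonoid α] {f : Sym2 V → α} [Fintype T.edgeSet] (hT : T.IsTree)
    (hf : T.DominatedAlongPaths f) [Fintype G.edgeSet] (hG : G.IsTree) :
    ∑ e ∈ G.edgeFinset, f e ≤ ∑ e ∈ T.edgeFinset, f e := by
  classical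
  induction hn : #(G.edgeFinset \ T.edgeFinset) using Nat.strong_induction_on generalizing G with
  | _ n ih =>
  obtain hsub | ⟨e, he⟩ := (G.edgeFinset \ T.edgeFinset).eq_empty_or_nonempty
  · rw [sdiff_eq_empty_iff_subset] at hsub
    have := hG.card_edgeFinset
    have := hT.card_edgeFinset
    rw [eq_of_subset_of_card_le hsub (by omega)]
  induction e with | h x y =>
  have hxyG := (mem_sdiff.mp he).1
  obtain ⟨a, b, hab, hweight, hr⟩ := hT.exists_exchange hf hG.isAcyclic (mem_edgeFinset.mp hxyG)
  have hE := edgeFinset_deleteEdges_sup_edge (G := G) s(x, y) hab.ne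
  have hab_notMem : s(a, b) ∉ G.edgeFinset.erase s(x, y) := by
    simpa [edgeSet_deleteEdges] using
      fun h1 h2 => hr (Adj.reachable (deleteEdges_adj.mpr ⟨h2, h1⟩))
  have hlt : #((G.deleteEdges {s(x, y)} ⊔ edge a b).edgeFinset \ T.edgeFinset) < n := by
    rw [hE, insert_sdiff_of_mem _ (mem_edgeFinset.mpr hab), erase_sdiff_comm, ← hn]
    exact card_erase_lt_of_mem he
  calc ∑ e ∈ G.edgeFinset, f e = f s(x, y) + ∑ e ∈ G.edgeFinset.erase s(x, y), f e :=
        (add_sum_erase _ _ hxyG).symm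
    _ ≤ f s(a, b) + ∑ e ∈ G.edgeFinset.erase s(x, y), f e := by gcongr
    _ = ∑ e ∈ (G.deleteEdges {s(x, y)} ⊔ edge a b).edgeFinset, f e := by
        rw [hE, sum_insert hab_notMem]
    _ ≤ ∑ e ∈ T.edgeFinset, f e :=
        ih _ hlt (hG.isTree_deleteEdges_sup_edge (mem_edgeFinset.mp hxyG) hab.ne hr) rfl

end SimpleGraph

/-- If `T` is a tree on a finite vertex set `V` and `w` is a symmetric weight function
such that `w a b ≤ min (w a u) (w u b)` whenever `u` is an internal vertex of the unique
path in `T` from `a` to `b`, then the edge-weight sum of `T` is at least that of any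
other tree `T'` on `V`. -/
theorem tree_max_weight_sum
    {V : Type*} [Fintype V] {T T' : SimpleGraph V}
    [Fintype T.edgeSet] [Fintype T'.edgeSet]
    (hT : T.IsTree) (hT' : T'.IsTree)
    (w : V → V → ℝ) (hsym : ∀ u v, w u v = w v u)
    (hpath : ∀ a u b : V, a ≠ u → u ≠ b → a ≠ b →
      ∀ p : T.Walk a b, p.IsPath → u ∈ p.support →
        w a b ≤ min (w a u) (w u b)) :
    ∑ e ∈ T'.edgeFinset, Sym2.lift ⟨w, hsym⟩ e ≤
      ∑ e ∈ T.edgeFinset, Sym2.lift ⟨w, hsym⟩ e :=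
  hT.sum_edgeFinset_le (f := Sym2.lift ⟨w, hsym⟩) hpath hT'
end

section
/- Let V be a finite vertex set, let T = (V, E) be a tree on V, and let λ : V × V → ℝ be a symmetric weight function such that for every triple of distinct vertices a, u, b ∈ V with u an internal vertex of the unique path in T from a to b, the strict inequality λ(a, b) < min(λ(a, u), λ(u, b)) holds. Then T is the unique maximizer of the edge-weight sum: for every tree T′ = (V, E′) on V with T′ ≠ T, one has Σ_{{u,v}∈E} λ(u, v) > Σ_{{u′,v′}∈E′} λ(u′, v′). -/
/-!
Exchange argument. If `T' ≠ T`, pick an edge `uv` of `T` missing from `T'`. Deleting `uv` cuts `T`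
in two, and the `T'`-path from `u` to `v` has an edge `ab` crossing the cut. Then `ab ∉ T`, the
`T`-path from `a` to `b` runs through `uv`, and the path inequality applied along that path gives
`w a b < w u v`. Swapping `ab` for `uv` in `T'` therefore yields a heavier tree that misses one
edge of `T` fewer, and induction on the number of edges of `T` missing from `T'` concludes.
-/

open Finset

namespace SimpleGraph

variable {V : Type*} {G T T' : SimpleGraph V} {u v a b : V}

theorem Walk.IsPath.ne_of_mem_edges {p : G.Walk u v} (hp : p.IsPath) {e : Sym2 V}
    (he : e ∈ p.edges) : u ≠ v := by
  rintro rfl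
  simp [Walk.edges_eq_nil.2 (Walk.isPath_iff_nil.1 hp)] at he

theorem Walk.IsPath.lt_lift_of_mem_edges {α : Type*} [LinearOrder α] {w : V → V → α}
    {hsym : ∀ u v, w u v = w v u}
    (hpath : ∀ a u b : V, a ≠ u → u ≠ b → a ≠ b →
      ∀ p : T.Walk a b, p.IsPath → u ∈ p.support → w a b < min (w a u) (w u b)) :
    ∀ {a b : V} {p : T.Walk a b}, p.IsPath → ∀ e ∈ p.edges, e ≠ s(a, b) →
      w a b < Sym2.lift ⟨w, hsym⟩ e
  | _, _, .nil, _, _, he, _ => by simp at he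
  | a, b, .cons (v := c) h q, hp, e, he, hne => by
    -- `c` is internal, so `w a b` is below `w a c` and `w c b`; the edges of `q` beat `w c b`.
    obtain ⟨hq, haq⟩ := (Walk.cons_isPath_iff h q).1 hp
    have hab : a ≠ b := by rintro rfl; exact haq q.end_mem_support
    rw [Walk.edges_cons, List.mem_cons] at he
    rcases he with rfl | he
    · have hcb : c ≠ b := by rintro rfl; exact hne rfl
      exact (hpath a c b h.ne hcb hab _ hp (by simp)).trans_le (min_le_left _ _)
    · have hcb : c ≠ b := hq.ne_of_mem_edges he
      have hcenter := (hpath a c b h.ne hcb hab _ hp (by simp)).trans_le (min_le_right _ _)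
      by_cases hecb : e = s(c, b)
      · subst hecb
        exact hcenter
      · exact hcenter.trans (hq.lt_lift_of_mem_edges hpath e he hecb)

theorem Reachable.lt_of_forall_walk_mem_edges {α : Type*} [LinearOrder α] {w : V → V → α}
    (hsym : ∀ u v, w u v = w v u)
    (hpath : ∀ a u b : V, a ≠ u → u ≠ b → a ≠ b →
      ∀ p : T.Walk a b, p.IsPath → u ∈ p.support → w a b < min (w a u) (w u b))
    (hr : T.Reachable a b) (hcross : ∀ q : T.Walk a b, s(u, v) ∈ q.edges)
    (hne : s(u, v) ≠ s(a, b)) : w a b < w u v := by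
  obtain ⟨q, hq⟩ := hr.exists_isPath
  simpa using hq.lt_lift_of_mem_edges (hsym := hsym) hpath _ (hcross q) hne

theorem IsBridge.exists_mem_edges_forall_walk_mem_edges (hb : T.IsBridge s(u, v))
    (p : G.Walk u v) : ∃ a b, s(a, b) ∈ p.edges ∧ ∀ q : T.Walk a b, s(u, v) ∈ q.edges := by
  obtain ⟨d, hd, hfst, hsnd⟩ := p.exists_boundary_dart
    {x | (T.deleteEdges {s(u, v)}).Reachable u x} Reachable.rfl (isBridge_iff.1 hb)
  refine ⟨d.fst, d.snd, p.edges_eq_map_darts ▸ List.mem_map_of_mem hd, fun q => ?_⟩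
  exact q.mem_edges_of_not_reachable_deleteEdges fun h => hsnd (hfst.trans h)

theorem IsTree.eq_of_le (hT : T.IsTree) (hT' : T'.IsAcyclic) (h : T ≤ T') : T = T' :=
  le_antisymm h ((isTree_iff_maximal_isAcyclic.1 hT).2.2 hT' h)

theorem edgeSet_sup_edge_deleteEdges (huv : u ≠ v) (a b : V) :
    ((G ⊔ edge u v).deleteEdges {s(a, b)}).edgeSet = insert s(u, v) G.edgeSet \ {s(a, b)} := by
  rw [edgeSet_deleteEdges, edgeSet_sup, edgeSet_edge_of_ne huv, Set.union_singleton]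

theorem Connected.sup_edge_deleteEdges (hG : G.Connected) {p : G.Walk u v} (hp : p.IsPath)
    (huv : ¬ G.Adj u v) (hab : s(a, b) ∈ p.edges) :
    ((G ⊔ edge u v).deleteEdges {s(a, b)}).Connected := by
  have hvu : (G ⊔ edge u v).Adj v u := Or.inr (by simp [edge_adj, (hp.ne_of_mem_edges hab).symm])
  have hc : (Walk.cons hvu (p.mapLe le_sup_left)).IsCycle :=
    (Walk.cons_isCycle_iff _ _).2
      ⟨hp.mapLe _, fun h => huv (p.adj_of_mem_edges (by simpa [Sym2.eq_swap] using h))⟩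
  refine (hG.mono le_sup_left).connected_delete_edge_of_not_isBridge fun hb => ?_
  exact hb.notMem_edges_of_isCycle hc (by simp [hab])

theorem IsTree.sup_edge_deleteEdges [Finite V] (hG : G.IsTree) {p : G.Walk u v}
    (hp : p.IsPath) (huv : ¬ G.Adj u v) (hab : s(a, b) ∈ p.edges) :
    ((G ⊔ edge u v).deleteEdges {s(a, b)}).IsTree := by
  refine isTree_iff_connected_and_card.2 ⟨hG.connected.sup_edge_deleteEdges hp huv hab, ?_⟩
  rw [Nat.card_coe_set_eq, edgeSet_sup_edge_deleteEdges (hp.ne_of_mem_edges hab),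
    Set.ncard_sdiff_singleton_of_mem (Set.mem_insert_of_mem _ (p.edges_subset_edgeSet hab)),
    Set.ncard_insert_of_notMem (show s(u, v) ∉ G.edgeSet from huv), Nat.add_sub_cancel,
    ← Nat.card_coe_set_eq, (isTree_iff_connected_and_card.1 hG).2]

theorem edgeFinset_sup_edge_deleteEdges [DecidableEq V] [Fintype G.edgeSet] (huv : u ≠ v)
    (a b : V) [Fintype ((G ⊔ edge u v).deleteEdges {s(a, b)}).edgeSet] :
    ((G ⊔ edge u v).deleteEdges {s(a, b)}).edgeFinset =
      (insert s(u, v) G.edgeFinset).erase s(a, b) := by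
  ext e
  rw [mem_edgeFinset, edgeSet_sup_edge_deleteEdges huv]
  simp [and_comm]

theorem sum_edgeFinset_sup_edge_deleteEdges {M : Type*} [AddCommGroup M] [DecidableEq V]
    [Fintype G.edgeSet] (huv : u ≠ v) (hn : ¬ G.Adj u v) (hab : G.Adj a b)
    [Fintype ((G ⊔ edge u v).deleteEdges {s(a, b)}).edgeSet] (f : Sym2 V → M) :
    ∑ e ∈ ((G ⊔ edge u v).deleteEdges {s(a, b)}).edgeFinset, f e =
      ∑ e ∈ G.edgeFinset, f e + f s(u, v) - f s(a, b) := by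
  rw [edgeFinset_sup_edge_deleteEdges huv,
    sum_erase_eq_sub (mem_insert_of_mem (mem_edgeFinset.2 hab)),
    sum_insert (mt mem_edgeFinset.1 hn), add_comm]

theorem sdiff_edgeFinset_sup_edge_deleteEdges [DecidableEq V] [Fintype T.edgeSet]
    [Fintype G.edgeSet] (huv : u ≠ v) (hab : ¬ T.Adj a b)
    [Fintype ((G ⊔ edge u v).deleteEdges {s(a, b)}).edgeSet] :
    T.edgeFinset \ ((G ⊔ edge u v).deleteEdges {s(a, b)}).edgeFinset =
      (T.edgeFinset \ G.edgeFinset).erase s(u, v) := by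
  rw [edgeFinset_sup_edge_deleteEdges huv]
  ext e
  simp only [mem_sdiff, mem_erase, mem_insert, mem_edgeFinset]
  have : e ∈ T.edgeSet → e ≠ s(a, b) := by rintro he rfl; exact hab he
  tauto

theorem IsTree.exists_exchange_s12 [Finite V] (hT : T.IsTree) (hT' : T'.IsTree) (huv : T.Adj u v)
    (huv' : ¬ T'.Adj u v) :
    ∃ a b, T'.Adj a b ∧ ¬ T.Adj a b ∧ (∀ q : T.Walk a b, s(u, v) ∈ q.edges) ∧
      ((T' ⊔ edge u v).deleteEdges {s(a, b)}).IsTree := by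
  obtain ⟨p, hp⟩ := hT'.connected.exists_isPath u v
  obtain ⟨a, b, hab, hcross⟩ :=
    (isAcyclic_iff_forall_adj_isBridge.1 hT.isAcyclic huv).exists_mem_edges_forall_walk_mem_edges p
  have hab' : T'.Adj a b := p.adj_of_mem_edges hab
  refine ⟨a, b, hab', fun h => ?_, hcross, hT'.sup_edge_deleteEdges hp huv' hab⟩
  have : s(u, v) = s(a, b) := by simpa using hcross h.toWalk
  exact huv' (by rw [← mem_edgeSet, this]; exact hab')

end SimpleGraph

open SimpleGraph in
/-- If `T` is a tree on a finite vertex set `V` and `w` is a symmetric weight function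
such that `w a b < min (w a u) (w u b)` whenever `u` is an internal vertex of the unique
path in `T` from `a` to `b`, then `T` is the unique maximizer of the edge-weight sum:
any other tree `T' ≠ T` on `V` has strictly smaller edge-weight sum. -/
theorem tree_unique_max_weight_sum
    {V : Type*} [Fintype V] {T T' : SimpleGraph V}
    [Fintype T.edgeSet] [Fintype T'.edgeSet]
    (hT : T.IsTree) (hT' : T'.IsTree)
    (w : V → V → ℝ) (hsym : ∀ u v, w u v = w v u)
    (hpath : ∀ a u b : V, a ≠ u → u ≠ b → a ≠ b →
      ∀ p : T.Walk a b, p.IsPath → u ∈ p.support →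
        w a b < min (w a u) (w u b))
    (hne : T' ≠ T) :
    ∑ e ∈ T'.edgeFinset, Sym2.lift ⟨w, hsym⟩ e <
      ∑ e ∈ T.edgeFinset, Sym2.lift ⟨w, hsym⟩ e := by
  classical
  induction hn : #(T.edgeFinset \ T'.edgeFinset) using Nat.strong_induction_on generalizing T'
    with | _ n ih =>
  obtain ⟨e, he⟩ : (T.edgeFinset \ T'.edgeFinset).Nonempty := by
    rw [nonempty_iff_ne_empty, Ne, sdiff_eq_empty_iff_subset, edgeFinset_subset_edgeFinset]
    exact fun h => hne (hT.eq_of_le hT'.isAcyclic h).symm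
  induction e using Sym2.ind with | _ u v => ?_
  obtain ⟨huv, huv'⟩ : T.Adj u v ∧ ¬ T'.Adj u v := by simpa using he
  obtain ⟨a, b, hab', hab, hcross, hT''⟩ := hT.exists_exchange_s12 hT' huv huv'
  have hw : w a b < w u v := (hT.connected a b).lt_of_forall_walk_mem_edges hsym hpath hcross
    (ne_of_mem_of_not_mem (s := T'.edgeSet) hab' huv').symm
  set T'' := (T' ⊔ edge u v).deleteEdges {s(a, b)}
  have hsum : ∑ e ∈ T'.edgeFinset, Sym2.lift ⟨w, hsym⟩ e <
      ∑ e ∈ T''.edgeFinset, Sym2.lift ⟨w, hsym⟩ e := by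
    rw [sum_edgeFinset_sup_edge_deleteEdges huv.ne huv' hab']
    simp only [Sym2.lift_mk]
    linarith
  by_cases hT''T : T'' = T
  · rwa [edgeFinset_inj.2 hT''T] at hsum
  · refine hsum.trans (ih _ ?_ hT'' hT''T rfl)
    rw [sdiff_edgeFinset_sup_edge_deleteEdges huv.ne hab, card_erase_of_mem he, hn]
    exact Nat.sub_one_lt_of_lt (hn ▸ card_pos.2 ⟨_, he⟩)
end

section
/- Let ι be a nonempty finite index set, let (Ω, 𝔽, P) be a probability space, let s : ι → ℝ be constants, and for each n ∈ ℕ and i ∈ ι let Ŝ_n(i) be a real random variable on Ω such that Ŝ_n(i) converges to s(i) in probability as n → ∞ for every i ∈ ι. Define the random argmax set Â_n = {i ∈ ι : Ŝ_n(j) ≤ Ŝ_n(i) for all j ∈ ι} and the deterministic argmax set A* = {i ∈ ι : s(j) ≤ s(i) for all j ∈ ι}. Then P(Â_n ⊆ A*) → 1 as n → ∞. Moreover, if A* = {i₀} is a singleton, then P(Â_n = {i₀}) → 1 as n → ∞. -/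
/-! If `s i < s j`, then `x i < x j` for every `x` close enough to `s`; since there are finitely
many pairs, every `x` near `s` has its argmax set inside that of `s`. Coordinatewise convergence
in probability over a finite index set is convergence in probability of the random vector
`(Ŝ_n(i))_i` to `s`, so the vector lies in any given neighbourhood of `s` with probability tending
to one. When the argmax set of `s` is `{i₀}`, the argmax set of `x` is nonempty and contained in
`{i₀}`, hence equal to it. -/

open MeasureTheory Filter Topology

section Argmax

variable {ι α : Type*} [LinearOrder α]

def argmaxSet (f : ι → α) : Set ι := {i | ∀ j, f j ≤ f i}

lemma argmaxSet_nonempty [Finite ι] [Nonempty ι] (f : ι → α) : (argmaxSet f).Nonempty :=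
  Finite.exists_max f

lemma argmaxSet_subset_of_lt_imp_lt {f g : ι → α} (h : ∀ i j, g i < g j → f i < f j) :
    argmaxSet f ⊆ argmaxSet g :=
  fun i hi j => not_lt.1 fun hlt => (h i j hlt).not_ge (hi j)

lemma eventually_argmaxSet_subset [Finite ι] [TopologicalSpace α] [OrderClosedTopology α]
    (g : ι → α) : ∀ᶠ f in 𝓝 g, argmaxSet f ⊆ argmaxSet g := by
  have hlt : ∀ᶠ f in 𝓝 g, ∀ i j, g i < g j → f i < f j :=
    eventually_all.2 fun i => eventually_all.2 fun j => eventually_imp_distrib_left.2 fun hij =>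
      (isOpen_lt (continuous_apply i) (continuous_apply j)).mem_nhds hij
  exact hlt.mono fun f => argmaxSet_subset_of_lt_imp_lt

end Argmax

namespace MeasureTheory

variable {α ι E : Type*} {m : MeasurableSpace α} {μ : Measure α} {l : Filter ι}

lemma tendstoInMeasure_of_tendsto_measure_lt_dist [PseudoMetricSpace E] {f : ι → α → E}
    {g : α → E} (h : ∀ ε > 0, Tendsto (fun i => μ {x | ε < dist (f i x) (g x)}) l (𝓝 0)) :
    TendstoInMeasure μ f l g := by
  refine tendstoInMeasure_iff_dist.2 fun ε hε => tendsto_nhds_bot_mono' (h (ε / 2) (half_pos hε))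
    fun i => measure_mono fun x (hx : ε ≤ _) => ?_
  show ε / 2 < _
  linarith

lemma TendstoInMeasure.pi {κ : Type*} [Fintype κ] {E : κ → Type*} [∀ k, EDist (E k)]
    {f : ι → α → ∀ k, E k} {g : α → ∀ k, E k}
    (h : ∀ k, TendstoInMeasure μ (fun i x => f i x k) l fun x => g x k) :
    TendstoInMeasure μ f l g := by
  intro ε hε
  have hsum : Tendsto (fun i => ∑ k, μ {x | ε ≤ edist (f i x k) (g x k)}) l (𝓝 0) := by
    simpa using tendsto_finsetSum Finset.univ fun k _ => h k ε hε
  refine tendsto_nhds_bot_mono' hsum fun i => (measure_mono fun x hx => ?_).trans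
    (measure_iUnion_fintype_le μ _)
  obtain ⟨k, -, hk⟩ := (Finset.le_sup_iff hε).1 (hx.trans_eq (edist_pi_def _ _))
  exact Set.mem_iUnion.2 ⟨k, hk⟩

variable [PseudoEMetricSpace E] {f : ι → α → E} {c : E} {p : E → Prop}

lemma TendstoInMeasure.tendsto_measure_setOf_not (h : TendstoInMeasure μ f l fun _ => c)
    (hp : ∀ᶠ y in 𝓝 c, p y) : Tendsto (fun i => μ {x | ¬p (f i x)}) l (𝓝 0) := by
  obtain ⟨ε, hε, hball⟩ := EMetric.mem_nhds_iff.1 hp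
  exact tendsto_nhds_bot_mono' (h ε hε) fun i => measure_mono fun x (hx : ¬p (f i x)) =>
    show ε ≤ edist (f i x) c from not_lt.1 fun hlt => hx (hball hlt)

lemma TendstoInMeasure.tendsto_measure_setOf [IsProbabilityMeasure μ]
    (h : TendstoInMeasure μ f l fun _ => c) (hp : ∀ᶠ y in 𝓝 c, p y) :
    Tendsto (fun i => μ {x | p (f i x)}) l (𝓝 1) := by
  have hlim : Tendsto (fun i => 1 - μ {x | ¬p (f i x)}) l (𝓝 1) := by
    simpa using ENNReal.Tendsto.sub tendsto_const_nhds (h.tendsto_measure_setOf_not hp)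
      (Or.inl ENNReal.one_ne_top)
  refine tendsto_of_tendsto_of_tendsto_of_le_of_le hlim tendsto_const_nhds (fun i => ?_)
    fun _ => prob_le_one
  rw [tsub_le_iff_right, ← measure_univ (μ := μ)]
  exact measure_univ_le_add_compl _

end MeasureTheory

theorem argmax_consistency_general
    {Ω : Type*} [MeasurableSpace Ω] (μ : Measure Ω) [IsProbabilityMeasure μ]
    {ι : Type*} [Fintype ι]
    (S : ℕ → ι → Ω → ℝ) (s : ι → ℝ)
    (hconv : ∀ i, ∀ ε > (0 : ℝ),
      Tendsto (fun n => μ {ω | ε < |S n i ω - s i|}) atTop (nhds 0)) :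
    Tendsto (fun n =>
        μ {ω | {i | ∀ j, S n j ω ≤ S n i ω} ⊆ {i | ∀ j, s j ≤ s i}}) atTop (nhds 1) ∧
      ∀ i₀ : ι, {i | ∀ j, s j ≤ s i} = {i₀} →
        Tendsto (fun n =>
          μ {ω | {i | ∀ j, S n j ω ≤ S n i ω} = {i₀}}) atTop (nhds 1) := by
  have hvec : TendstoInMeasure μ (fun n ω i => S n i ω) atTop fun _ => s :=
    TendstoInMeasure.pi fun i => tendstoInMeasure_of_tendsto_measure_lt_dist fun ε hε => by
      simpa only [Real.dist_eq] using hconv i ε hε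
  refine ⟨hvec.tendsto_measure_setOf (eventually_argmaxSet_subset s), fun i₀ hs => ?_⟩
  have : Nonempty ι := ⟨i₀⟩
  refine hvec.tendsto_measure_setOf (p := fun x => argmaxSet x = {i₀})
    ((eventually_argmaxSet_subset s).mono fun x hx => ?_)
  exact (argmaxSet_nonempty x).subset_singleton_iff.1 (hs ▸ hx)

/-- Argmax consistency: if for each `i` in a nonempty finite index set the random
variables `S n i` converge in probability to the constant `s i`, then with probability
tending to one the random argmax set is contained in the deterministic argmax set;
moreover, if the deterministic argmax set is a singleton `{i₀}`, then with probability
tending to one the random argmax set equals `{i₀}`. -/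
theorem argmax_consistency
    {Ω : Type*} [MeasurableSpace Ω] (μ : Measure Ω) [IsProbabilityMeasure μ]
    {ι : Type*} [Fintype ι] [Nonempty ι]
    (S : ℕ → ι → Ω → ℝ) (s : ι → ℝ)
    (hmeas : ∀ n i, Measurable (S n i))
    (hconv : ∀ i, ∀ ε > (0 : ℝ),
      Tendsto (fun n => μ {ω | ε < |S n i ω - s i|}) atTop (nhds 0)) :
    Tendsto (fun n =>
        μ {ω | {i | ∀ j, S n j ω ≤ S n i ω} ⊆ {i | ∀ j, s j ≤ s i}}) atTop (nhds 1) ∧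
      ∀ i₀ : ι, {i | ∀ j, s j ≤ s i} = {i₀} →
        Tendsto (fun n =>
          μ {ω | {i | ∀ j, S n j ω ≤ S n i ω} = {i₀}}) atTop (nhds 1) :=
  argmax_consistency_general μ S s hconv
end

section
/- Let ψ_a, ψ_b ∈ [0, 1] and let ε, ε_a, ε_b be mutually independent unit-Fréchet random variables, i.e. P(ε ≤ x) = exp(−1/x) for x > 0. Define Z_a = max(ψ_a·ε, (1 − ψ_a)·ε_a) and Z_b = max(ψ_b·ε, (1 − ψ_b)·ε_b). Then lim_{t→∞} t · P(Z_a > t and Z_b > t) = min(ψ_a, ψ_b). -/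
/-!
With `X = (ε, ε_a, ε_b)`, the events `{Z_a ≤ t}`, `{Z_b ≤ t}` and their intersection are all of the
form `{∀ i, c i * X i ≤ t}` with nonnegative weights `c = (ψ_a, 1 - ψ_a, 0)`, `(ψ_b, 0, 1 - ψ_b)` and
`(max ψ_a ψ_b, 1 - ψ_a, 1 - ψ_b)`. By independence such an event has probability
`exp (-(∑ i, c i) / t)`, and the weight sums are `1`, `1` and `2 - min ψ_a ψ_b`. Inclusion–exclusion
gives `P(Z_a > t, Z_b > t) = 1 - 2 exp (-1/t) + exp (-(2 - m)/t)` with `m = min ψ_a ψ_b`, and `t` times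
this tends to the derivative at `0` of `u ↦ 1 - 2 exp (-u) + exp (-(2 - m) u)`, which is `m`.
-/

open MeasureTheory ProbabilityTheory Filter Topology

theorem HasDerivAt.tendsto_mul_comp_inv_atTop {f : ℝ → ℝ} {f' : ℝ} (hf : HasDerivAt f f' 0)
    (hf0 : f 0 = 0) : Tendsto (fun t => t * f t⁻¹) atTop (𝓝 f') := by
  simpa [Function.comp_def, hf0] using
    hf.tendsto_slope_zero_right.comp tendsto_inv_atTop_nhdsGT_zero

theorem tendsto_mul_one_sub_exp_sub_exp_add_exp (a b c : ℝ) :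
    Tendsto (fun t => t * (1 - Real.exp (-a / t) - Real.exp (-b / t) + Real.exp (-c / t)))
      atTop (𝓝 (a + b - c)) := by
  have hexp : ∀ k : ℝ, HasDerivAt (fun u => Real.exp (-k * u)) (-k) 0 := fun k => by
    simpa using ((hasDerivAt_id (0 : ℝ)).const_mul (-k)).exp
  have hf := (((hasDerivAt_const (0 : ℝ) (1 : ℝ)).sub (hexp a)).sub (hexp b)).add (hexp c)
  simpa [div_eq_mul_inv, neg_mul, sub_eq_add_neg, add_comm, add_left_comm] using
    hf.tendsto_mul_comp_inv_atTop (by simp)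

theorem max_mul_le_iff {a b x t : ℝ} (ha : 0 ≤ a) (hb : 0 ≤ b) (ht : 0 ≤ t) :
    max a b * x ≤ t ↔ a * x ≤ t ∧ b * x ≤ t := by
  rcases le_total 0 x with hx | hx
  · rw [max_mul_of_nonneg _ _ hx, max_le_iff]
  · have hle : ∀ c, 0 ≤ c → c * x ≤ t := fun c hc =>
      (mul_nonpos_of_nonneg_of_nonpos hc hx).trans ht
    exact iff_of_true (hle _ (le_max_of_le_left ha)) ⟨hle a ha, hle b hb⟩

section

variable {Ω : Type*} [MeasurableSpace Ω] {μ : Measure Ω} [IsProbabilityMeasure μ]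

theorem measureReal_compl_union {A B : Set Ω} (hA : MeasurableSet A) (hB : MeasurableSet B) :
    μ.real (A ∪ B)ᶜ = 1 - μ.real A - μ.real B + μ.real (A ∩ B) := by
  rw [probReal_compl_eq_one_sub (hA.union hB)]
  linarith [measureReal_union_add_inter (μ := μ) (s := A) hB]

theorem measurableSet_forall_mul_le {ι : Type*} [Countable ι] {X : ι → Ω → ℝ}
    (hX : ∀ i, Measurable (X i)) (c : ι → ℝ) (t : ℝ) :
    MeasurableSet {ω | ∀ i, c i * X i ω ≤ t} := by
  rw [Set.ofPred_forall]
  exact .iInter fun i => measurableSet_le (measurable_const.mul (hX i)) measurable_const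

theorem measureReal_mul_le_eq_exp_of_unitFrechet {X : Ω → ℝ}
    (hX : ∀ x : ℝ, 0 < x → μ {ω | X ω ≤ x} = ENNReal.ofReal (Real.exp (-1 / x)))
    {c t : ℝ} (hc : 0 ≤ c) (ht : 0 < t) :
    μ.real {ω | c * X ω ≤ t} = Real.exp (-c / t) := by
  rcases hc.eq_or_lt with rfl | hc
  · simp [ht.le]
  · have hset : {ω | c * X ω ≤ t} = {ω | X ω ≤ t / c} := by
      ext ω; simp only [Set.mem_ofPred_eq, le_div_iff₀ hc, mul_comm]
    rw [measureReal_def, hset, hX _ (div_pos ht hc), ENNReal.toReal_ofReal (Real.exp_nonneg _),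
      div_div_eq_mul_div, neg_one_mul]

theorem measureReal_forall_mul_le_eq_exp_of_iIndepFun {ι : Type*} [Fintype ι]
    {X : ι → Ω → ℝ} (hind : iIndepFun X μ)
    (hX : ∀ i x, 0 < x → μ {ω | X i ω ≤ x} = ENNReal.ofReal (Real.exp (-1 / x)))
    {c : ι → ℝ} (hc : 0 ≤ c) {t : ℝ} (ht : 0 < t) :
    μ.real {ω | ∀ i, c i * X i ω ≤ t} = Real.exp (-(∑ i, c i) / t) := by
  have hprod := hind.measure_inter_preimage_eq_mul (S := Finset.univ)
    (sets := fun i => {x | c i * x ≤ t}) fun i _ =>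
      measurableSet_le (measurable_const.mul measurable_id) measurable_const
  have hset : {ω | ∀ i, c i * X i ω ≤ t} = ⋂ i ∈ Finset.univ, X i ⁻¹' {x | c i * x ≤ t} := by
    ext ω; simp
  rw [measureReal_def, hset, hprod, ENNReal.toReal_prod]
  simp_rw [← measureReal_def, Set.preimage_ofPred_eq,
    fun i => measureReal_mul_le_eq_exp_of_unitFrechet (hX i) (hc i) ht, ← Real.exp_sum]
  rw [← Finset.sum_neg_distrib, Finset.sum_div]

theorem measureReal_asymmetric_logistic_joint_exceedance {ψa ψb : ℝ}
    (hψa : ψa ∈ Set.Icc (0 : ℝ) 1) (hψb : ψb ∈ Set.Icc (0 : ℝ) 1) {ε εa εb : Ω → ℝ}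
    (hmeas : Measurable ε) (hmeasa : Measurable εa) (hmeasb : Measurable εb)
    (hFr : ∀ x : ℝ, 0 < x → μ {ω | ε ω ≤ x} = ENNReal.ofReal (Real.exp (-1 / x)))
    (hFra : ∀ x : ℝ, 0 < x → μ {ω | εa ω ≤ x} = ENNReal.ofReal (Real.exp (-1 / x)))
    (hFrb : ∀ x : ℝ, 0 < x → μ {ω | εb ω ≤ x} = ENNReal.ofReal (Real.exp (-1 / x)))
    (hind : iIndepFun ![ε, εa, εb] μ) {t : ℝ} (ht : 0 < t) :
    μ.real {ω | t < max (ψa * ε ω) ((1 - ψa) * εa ω) ∧ t < max (ψb * ε ω) ((1 - ψb) * εb ω)}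
      = 1 - 2 * Real.exp (-1 / t) + Real.exp (-(2 - min ψa ψb) / t) := by
  obtain ⟨ha0, ha1⟩ := hψa
  obtain ⟨hb0, hb1⟩ := hψb
  set X := ![ε, εa, εb]
  have hXmeas : ∀ i, Measurable (X i) := by intro i; fin_cases i <;> assumption
  have hXlaw : ∀ i x, 0 < x → μ {ω | X i ω ≤ x} = ENNReal.ofReal (Real.exp (-1 / x)) := by
    intro i; fin_cases i <;> assumption
  let E : (Fin 3 → ℝ) → Set Ω := fun c => {ω | ∀ i, c i * X i ω ≤ t}
  have hevent : {ω | t < max (ψa * ε ω) ((1 - ψa) * εa ω) ∧ t < max (ψb * ε ω) ((1 - ψb) * εb ω)}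
      = (E ![ψa, 1 - ψa, 0] ∪ E ![ψb, 0, 1 - ψb])ᶜ := by
    ext ω; simp [E, X, Fin.forall_fin_succ, ht.le, imp_iff_not_or]
  have hinter : E ![ψa, 1 - ψa, 0] ∩ E ![ψb, 0, 1 - ψb] = E ![max ψa ψb, 1 - ψa, 1 - ψb] := by
    ext ω; simp [E, X, Fin.forall_fin_succ, ht.le, max_mul_le_iff ha0 hb0 ht.le, and_assoc, and_left_comm]
  have hprob : ∀ c s, 0 ≤ c → ∑ i, c i = s → μ.real (E c) = Real.exp (-s / t) :=
    fun c s hc hs => hs ▸ measureReal_forall_mul_le_eq_exp_of_iIndepFun hind hXlaw hc ht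
  have hsa : ∑ i, ![ψa, 1 - ψa, 0] i = 1 := by simp [Fin.sum_univ_three]
  have hsb : ∑ i, ![ψb, 0, 1 - ψb] i = 1 := by simp [Fin.sum_univ_three]
  have hsab : ∑ i, ![max ψa ψb, 1 - ψa, 1 - ψb] i = 2 - min ψa ψb := by
    simp only [Fin.sum_univ_three, Matrix.cons_val]; linarith [max_add_min ψa ψb]
  have hca : 0 ≤ ![ψa, 1 - ψa, 0] := by intro i; fin_cases i <;> simp [ha0, ha1]
  have hcb : 0 ≤ ![ψb, 0, 1 - ψb] := by intro i; fin_cases i <;> simp [hb0, hb1]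
  have hcab : 0 ≤ ![max ψa ψb, 1 - ψa, 1 - ψb] := by
    intro i; fin_cases i <;> simp [ha0, ha1, hb1]
  rw [hevent, measureReal_compl_union (measurableSet_forall_mul_le hXmeas _ _)
    (measurableSet_forall_mul_le hXmeas _ _), hinter, hprob _ _ hca hsa, hprob _ _ hcb hsb,
    hprob _ _ hcab hsab]
  ring

end

theorem asymmetric_logistic_tail_dependence_general
    {Ω : Type*} [MeasurableSpace Ω] (μ : Measure Ω) [IsProbabilityMeasure μ]
    (ψa ψb : ℝ) (hψa : ψa ∈ Set.Icc (0 : ℝ) 1) (hψb : ψb ∈ Set.Icc (0 : ℝ) 1)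
    (ε εa εb : Ω → ℝ)
    (hmeas : Measurable ε) (hmeasa : Measurable εa) (hmeasb : Measurable εb)
    (hFr : ∀ x : ℝ, 0 < x → μ {ω | ε ω ≤ x} = ENNReal.ofReal (Real.exp (-1 / x)))
    (hFra : ∀ x : ℝ, 0 < x → μ {ω | εa ω ≤ x} = ENNReal.ofReal (Real.exp (-1 / x)))
    (hFrb : ∀ x : ℝ, 0 < x → μ {ω | εb ω ≤ x} = ENNReal.ofReal (Real.exp (-1 / x)))
    (hind : iIndepFun ![ε, εa, εb] μ) :
    Tendsto (fun t : ℝ => t *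
        (μ {ω | t < max (ψa * ε ω) ((1 - ψa) * εa ω) ∧
                t < max (ψb * ε ω) ((1 - ψb) * εb ω)}).toReal)
      atTop (nhds (min ψa ψb)) := by
  have hlim := tendsto_mul_one_sub_exp_sub_exp_add_exp 1 1 (2 - min ψa ψb)
  rw [show (1 : ℝ) + 1 - (2 - min ψa ψb) = min ψa ψb by ring] at hlim
  refine hlim.congr' ?_
  filter_upwards [eventually_gt_atTop 0] with t ht
  rw [← measureReal_def, measureReal_asymmetric_logistic_joint_exceedance hψa hψb hmeas hmeasa
    hmeasb hFr hFra hFrb hind ht]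
  ring

/-- For the bivariate max-linear (asymmetric logistic) model
`Z_a = max (ψ_a ε) ((1-ψ_a) ε_a)`, `Z_b = max (ψ_b ε) ((1-ψ_b) ε_b)` built from
mutually independent unit-Fréchet random variables, the upper tail dependence
coefficient is `lim_{t→∞} t P(Z_a > t, Z_b > t) = min ψ_a ψ_b`. -/
theorem asymmetric_logistic_tail_dependence
    {Ω : Type*} [MeasurableSpace Ω] (μ : Measure Ω) [IsProbabilityMeasure μ]
    (ψa ψb : ℝ) (hψa : ψa ∈ Set.Icc (0 : ℝ) 1) (hψb : ψb ∈ Set.Icc (0 : ℝ) 1)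
    (ε εa εb : Ω → ℝ)
    (hmeas : Measurable ε) (hmeasa : Measurable εa) (hmeasb : Measurable εb)
    (hFr : ∀ x : ℝ, 0 < x → μ {ω | ε ω ≤ x} = ENNReal.ofReal (Real.exp (-1 / x)))
    (hFr0 : μ {ω | ε ω ≤ 0} = 0)
    (hFra : ∀ x : ℝ, 0 < x → μ {ω | εa ω ≤ x} = ENNReal.ofReal (Real.exp (-1 / x)))
    (hFra0 : μ {ω | εa ω ≤ 0} = 0)
    (hFrb : ∀ x : ℝ, 0 < x → μ {ω | εb ω ≤ x} = ENNReal.ofReal (Real.exp (-1 / x)))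
    (hFrb0 : μ {ω | εb ω ≤ 0} = 0)
    (hind : iIndepFun ![ε, εa, εb] μ) :
    Tendsto (fun t : ℝ => t *
        (μ {ω | t < max (ψa * ε ω) ((1 - ψa) * εa ω) ∧
                t < max (ψb * ε ω) ((1 - ψb) * εb ω)}).toReal)
      atTop (nhds (min ψa ψb)) :=
  asymmetric_logistic_tail_dependence_general μ ψa ψb hψa hψb ε εa εb hmeas hmeasa hmeasb hFr hFra
    hFrb hind
end

section
/- Let ε_1, Y_2, ε_3 be mutually independent unit-Fréchet random variables, i.e. P(Y_2 ≤ x) = exp(−1/x) for x > 0 (and similarly for ε_1, ε_3), and define Y_1 = max(Y_2, ε_1)/2 and Y_3 = max(Y_2, ε_3)/2. Then: (i) Y_1 is unit-Fréchet, i.e. P(Y_1 ≤ x) = exp(−1/x) for all x > 0; (ii) lim_{t→∞} t · P(Y_1 > t and Y_2 > t) = 1/2; and (iii) lim_{t→∞} t · P(Y_1 > t and Y_3 > t) = 1/2. -/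
/-!
Splitting on whether `Y₂` exceeds `2t`, each joint exceedance event is `{Y₂ > 2t}` plus a
disjoint piece that additionally requires some `εᵢ > 2t`. By independence that piece has
probability `O(1/t) · P(εᵢ > 2t) = o(1/t)`, so both tail dependence limits equal
`lim t · P(Y₂ > 2t) = 1/2`.
-/

open MeasureTheory ProbabilityTheory Filter Topology

noncomputable def frechetSurvival (x : ℝ) : ℝ := 1 - Real.exp (-1 / x)

-- `t * frechetSurvival (c * t)` is `c⁻¹` times the difference quotient of `s ↦ 1 - exp (-s)`
-- at `0` with step `(c * t)⁻¹`.
lemma tendsto_mul_frechetSurvival {c : ℝ} (hc : 0 < c) :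
    Tendsto (fun t => t * frechetSurvival (c * t)) atTop (𝓝 (1 / c)) := by
  have hderiv : HasDerivAt (fun s => 1 - Real.exp (-s)) 1 0 := by
    simpa using ((Real.hasDerivAt_exp _).comp 0 (hasDerivAt_neg 0)).const_sub 1
  have hslope := (hasDerivAt_iff_tendsto_slope_zero.mp hderiv).mono_left (nhdsGT_le_nhdsNE 0)
  have hu : Tendsto (fun t => (c * t)⁻¹) atTop (𝓝[>] 0) :=
    tendsto_inv_atTop_nhdsGT_zero.comp (tendsto_id.const_mul_atTop hc)
  have := (hslope.comp hu).const_mul c⁻¹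
  rw [one_div, ← mul_one c⁻¹]
  refine this.congr' ?_
  filter_upwards [eventually_gt_atTop 0] with t ht
  simp only [Function.comp_apply, frechetSurvival, zero_add, neg_zero, Real.exp_zero, sub_zero,
    smul_eq_mul, inv_inv, sub_self]
  field_simp

lemma tendsto_frechetSurvival_atTop : Tendsto frechetSurvival atTop (𝓝 0) := by
  have h : Tendsto (fun x : ℝ => -1 / x) atTop (𝓝 0) := tendsto_const_nhds.div_atTop tendsto_id
  show Tendsto (fun x : ℝ => 1 - Real.exp (-1 / x)) atTop (𝓝 0)
  simpa [Function.comp_def] using ((Real.continuous_exp.tendsto 0).comp h).const_sub 1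

def IsUnitFrechet {Ω : Type*} [MeasurableSpace Ω] (μ : Measure Ω) (X : Ω → ℝ) : Prop :=
  ∀ x : ℝ, 0 < x → μ {ω | X ω ≤ x} = ENNReal.ofReal (Real.exp (-1 / x))

namespace IsUnitFrechet

variable {Ω : Type*} [MeasurableSpace Ω] {μ : Measure Ω} {X Y : Ω → ℝ} {x : ℝ}

lemma measureReal_le (hX : IsUnitFrechet μ X) (hx : 0 < x) :
    μ.real {ω | X ω ≤ x} = Real.exp (-1 / x) := by
  rw [measureReal_def, hX x hx, ENNReal.toReal_ofReal (Real.exp_pos _).le]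

lemma measureReal_lt [IsProbabilityMeasure μ] (hX : IsUnitFrechet μ X) (hXm : Measurable X)
    (hx : 0 < x) : μ.real {ω | x < X ω} = frechetSurvival x := by
  have hcompl : {ω | x < X ω} = {ω | X ω ≤ x}ᶜ := by ext; simp
  rw [hcompl, probReal_compl_eq_one_sub (measurableSet_le hXm measurable_const),
    hX.measureReal_le hx, frechetSurvival]

lemma measureReal_lt_and_le [IsProbabilityMeasure μ] (hX : IsUnitFrechet μ X)
    (hXm : Measurable X) {s t : ℝ} (ht : 0 < t) (hts : t ≤ s) :
    μ.real {ω | t < X ω ∧ X ω ≤ s} = frechetSurvival t - frechetSurvival s := by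
  have hdiff : {ω | t < X ω ∧ X ω ≤ s} = {ω | t < X ω} \ {ω | s < X ω} := by ext; simp
  rw [hdiff, measureReal_sdiff (Set.ofPred_subset_ofPred.2 fun _ => hts.trans_lt)
      (measurableSet_lt measurable_const hXm),
    hX.measureReal_lt hXm ht, hX.measureReal_lt hXm (ht.trans_le hts)]

lemma max_div_two (hX : IsUnitFrechet μ X) (hY : IsUnitFrechet μ Y) (hXY : IndepFun X Y μ) :
    IsUnitFrechet μ (fun ω => max (X ω) (Y ω) / 2) := by
  intro x hx
  have h2x : 0 < 2 * x := by positivity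
  calc μ {ω | max (X ω) (Y ω) / 2 ≤ x}
      = μ (X ⁻¹' Set.Iic (2 * x) ∩ Y ⁻¹' Set.Iic (2 * x)) := by
        congr 1; ext ω; simp [div_le_iff₀, mul_comm]
    _ = μ {ω | X ω ≤ 2 * x} * μ {ω | Y ω ≤ 2 * x} :=
        hXY.measure_inter_preimage_eq_mul _ _ measurableSet_Iic measurableSet_Iic
    _ = ENNReal.ofReal (Real.exp (-1 / (2 * x)) * Real.exp (-1 / (2 * x))) := by
        rw [hX _ h2x, hY _ h2x, ENNReal.ofReal_mul (Real.exp_pos _).le]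
    _ = ENNReal.ofReal (Real.exp (-1 / x)) := by
        rw [← Real.exp_add]; congr 2; field_simp; ring

end IsUnitFrechet

section JointTail

variable {Ω : Type*} {Y E E' : Ω → ℝ} {t : ℝ}

lemma setOf_lt_max_div_two_and_lt (ht : 0 ≤ t) :
    {ω | t < max (Y ω) (E ω) / 2 ∧ t < Y ω} =
      {ω | 2 * t < Y ω} ∪ ({ω | t < Y ω ∧ Y ω ≤ 2 * t} ∩ {ω | 2 * t < E ω}) := by
  ext ω
  simp only [Set.mem_union, Set.mem_inter_iff, Set.mem_ofPred_eq,
    lt_div_iff₀ (two_pos : (0 : ℝ) < 2), lt_max_iff]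
  grind

lemma setOf_lt_max_div_two_and_lt_max_div_two :
    {ω | t < max (Y ω) (E ω) / 2 ∧ t < max (Y ω) (E' ω) / 2} =
      {ω | 2 * t < Y ω} ∪ ({ω | 2 * t < E ω} ∩ {ω | Y ω ≤ 2 * t} ∩ {ω | 2 * t < E' ω}) := by
  ext ω
  simp only [Set.mem_union, Set.mem_inter_iff, Set.mem_ofPred_eq,
    lt_div_iff₀ (two_pos : (0 : ℝ) < 2), lt_max_iff]
  grind

end JointTail

namespace ProbabilityTheory

variable {Ω β : Type*} [MeasurableSpace Ω] [MeasurableSpace β] {μ : Measure Ω}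

lemma IndepFun.measureReal_inter_preimage_eq_mul {γ : Type*} [MeasurableSpace γ]
    {f : Ω → β} {g : Ω → γ} (h : IndepFun f g μ) {s : Set β} {t : Set γ}
    (hs : MeasurableSet s) (ht : MeasurableSet t) :
    μ.real (f ⁻¹' s ∩ g ⁻¹' t) = μ.real (f ⁻¹' s) * μ.real (g ⁻¹' t) := by
  simp only [measureReal_def, h.measure_inter_preimage_eq_mul _ _ hs ht, ENNReal.toReal_mul]

lemma iIndepFun.measureReal_inter_preimage_eq_mul_three {X Y Z : Ω → β}
    (h : iIndepFun ![X, Y, Z] μ) {A B C : Set β}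
    (hA : MeasurableSet A) (hB : MeasurableSet B) (hC : MeasurableSet C) :
    μ.real (X ⁻¹' A ∩ Y ⁻¹' B ∩ Z ⁻¹' C) =
      μ.real (X ⁻¹' A) * μ.real (Y ⁻¹' B) * μ.real (Z ⁻¹' C) := by
  have key := h.measure_inter_preimage_eq_mul Finset.univ (sets := ![A, B, C])
    (by intro i _; fin_cases i <;> assumption)
  have hinter : ⋂ i ∈ Finset.univ, ![X, Y, Z] i ⁻¹' ![A, B, C] i =
      X ⁻¹' A ∩ Y ⁻¹' B ∩ Z ⁻¹' C := by
    ext ω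
    simp [Fin.forall_fin_succ, and_assoc]
  simp only [measureReal_def, ← hinter, key, Fin.prod_univ_three, ENNReal.toReal_mul]
  rfl

end ProbabilityTheory

section JointTailProbability

variable {Ω : Type*} [MeasurableSpace Ω] {μ : Measure Ω} [IsProbabilityMeasure μ]
  {Y E E' : Ω → ℝ} {t : ℝ}

lemma measureReal_lt_max_div_two_and_lt (hY : IsUnitFrechet μ Y) (hE : IsUnitFrechet μ E)
    (hYm : Measurable Y) (hEm : Measurable E) (hind : IndepFun Y E μ) (ht : 0 < t) :
    μ.real {ω | t < max (Y ω) (E ω) / 2 ∧ t < Y ω} =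
      frechetSurvival (2 * t) +
        (frechetSurvival t - frechetSurvival (2 * t)) * frechetSurvival (2 * t) := by
  have hdisj : Disjoint {ω | 2 * t < Y ω} ({ω | t < Y ω ∧ Y ω ≤ 2 * t} ∩ {ω | 2 * t < E ω}) :=
    Set.disjoint_left.2 fun _ h₁ h₂ => h₂.1.2.not_gt h₁
  have hprod : μ.real ({ω | t < Y ω ∧ Y ω ≤ 2 * t} ∩ {ω | 2 * t < E ω}) =
      μ.real {ω | t < Y ω ∧ Y ω ≤ 2 * t} * μ.real {ω | 2 * t < E ω} :=
    hind.measureReal_inter_preimage_eq_mul measurableSet_Ioc measurableSet_Ioi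
  rw [setOf_lt_max_div_two_and_lt ht.le,
    measureReal_union hdisj ((hYm measurableSet_Ioc).inter (hEm measurableSet_Ioi)), hprod,
    hY.measureReal_lt hYm (by positivity), hY.measureReal_lt_and_le hYm ht (by linarith),
    hE.measureReal_lt hEm (by positivity)]

lemma measureReal_lt_max_div_two_and_lt_max_div_two (hY : IsUnitFrechet μ Y)
    (hE : IsUnitFrechet μ E) (hE' : IsUnitFrechet μ E') (hYm : Measurable Y)
    (hEm : Measurable E) (hE'm : Measurable E') (hind : iIndepFun ![E, Y, E'] μ) (ht : 0 < t) :
    μ.real {ω | t < max (Y ω) (E ω) / 2 ∧ t < max (Y ω) (E' ω) / 2} =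
      frechetSurvival (2 * t) +
        frechetSurvival (2 * t) * (1 - frechetSurvival (2 * t)) * frechetSurvival (2 * t) := by
  have h2t : 0 < 2 * t := by positivity
  have hdisj : Disjoint {ω | 2 * t < Y ω}
      ({ω | 2 * t < E ω} ∩ {ω | Y ω ≤ 2 * t} ∩ {ω | 2 * t < E' ω}) :=
    Set.disjoint_left.2 fun _ (h₁ : 2 * t < _) h₂ => h₂.1.2.not_gt h₁
  have hprod : μ.real ({ω | 2 * t < E ω} ∩ {ω | Y ω ≤ 2 * t} ∩ {ω | 2 * t < E' ω}) =
      μ.real {ω | 2 * t < E ω} * μ.real {ω | Y ω ≤ 2 * t} * μ.real {ω | 2 * t < E' ω} :=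
    hind.measureReal_inter_preimage_eq_mul_three measurableSet_Ioi measurableSet_Iic
      measurableSet_Ioi
  rw [setOf_lt_max_div_two_and_lt_max_div_two, measureReal_union hdisj
      (((hEm measurableSet_Ioi).inter (hYm measurableSet_Iic)).inter (hE'm measurableSet_Ioi)),
    hprod, hY.measureReal_lt hYm h2t, hE.measureReal_lt hEm h2t, hE'.measureReal_lt hE'm h2t,
    hY.measureReal_le h2t, frechetSurvival]
  ring

end JointTailProbability

theorem markov_tree_counterexample_general
    {Ω : Type*} [MeasurableSpace Ω] (μ : Measure Ω) [IsProbabilityMeasure μ]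
    (ε₁ Y₂ ε₃ : Ω → ℝ)
    (hmeas₁ : Measurable ε₁) (hmeas₂ : Measurable Y₂) (hmeas₃ : Measurable ε₃)
    (hFr₁ : ∀ x : ℝ, 0 < x → μ {ω | ε₁ ω ≤ x} = ENNReal.ofReal (Real.exp (-1 / x)))
    (hFr₂ : ∀ x : ℝ, 0 < x → μ {ω | Y₂ ω ≤ x} = ENNReal.ofReal (Real.exp (-1 / x)))
    (hFr₃ : ∀ x : ℝ, 0 < x → μ {ω | ε₃ ω ≤ x} = ENNReal.ofReal (Real.exp (-1 / x)))
    (hind : iIndepFun ![ε₁, Y₂, ε₃] μ) :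
    (∀ x : ℝ, 0 < x →
        μ {ω | max (Y₂ ω) (ε₁ ω) / 2 ≤ x} = ENNReal.ofReal (Real.exp (-1 / x))) ∧
      Tendsto (fun t : ℝ => t *
          (μ {ω | t < max (Y₂ ω) (ε₁ ω) / 2 ∧ t < Y₂ ω}).toReal)
        atTop (nhds (1 / 2)) ∧
      Tendsto (fun t : ℝ => t *
          (μ {ω | t < max (Y₂ ω) (ε₁ ω) / 2 ∧ t < max (Y₂ ω) (ε₃ ω) / 2}).toReal)
        atTop (nhds (1 / 2)) := by
  have hind₂₁ : IndepFun Y₂ ε₁ μ := by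
    simpa using hind.indepFun (show (1 : Fin 3) ≠ 0 by decide)
  have hlim₂ : Tendsto (fun t => t * frechetSurvival (2 * t)) atTop (𝓝 (1 / 2)) :=
    tendsto_mul_frechetSurvival two_pos
  have hlim₁ : Tendsto (fun t => t * frechetSurvival t) atTop (𝓝 1) := by
    simpa using tendsto_mul_frechetSurvival one_pos
  have hvanish : Tendsto (fun t => frechetSurvival (2 * t)) atTop (𝓝 0) :=
    tendsto_frechetSurvival_atTop.comp (tendsto_id.const_mul_atTop two_pos)
  refine ⟨IsUnitFrechet.max_div_two hFr₂ hFr₁ hind₂₁, ?_, ?_⟩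
  · have h := hlim₂.add ((hlim₁.sub hlim₂).mul hvanish)
    rw [mul_zero, add_zero] at h
    refine h.congr' ?_
    filter_upwards [eventually_gt_atTop 0] with t ht
    rw [← measureReal_def, measureReal_lt_max_div_two_and_lt hFr₂ hFr₁ hmeas₂ hmeas₁ hind₂₁ ht]
    ring
  · have h := hlim₂.add (((hvanish.const_sub 1).mul hlim₂).mul hvanish)
    rw [mul_zero, add_zero] at h
    refine h.congr' ?_
    filter_upwards [eventually_gt_atTop 0] with t ht
    rw [← measureReal_def, measureReal_lt_max_div_two_and_lt_max_div_two hFr₂ hFr₁ hFr₃ hmeas₂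
      hmeas₁ hmeas₃ hind ht]
    ring

/-- Counter-example after Proposition 3: with `ε₁, Y₂, ε₃` mutually independent
unit-Fréchet and `Y₁ = max(Y₂, ε₁)/2`, `Y₃ = max(Y₂, ε₃)/2`, the variable `Y₁` is
unit-Fréchet and the tail dependence coefficients satisfy
`lim t P(Y₁ > t, Y₂ > t) = lim t P(Y₁ > t, Y₃ > t) = 1/2`. -/
theorem markov_tree_counterexample
    {Ω : Type*} [MeasurableSpace Ω] (μ : Measure Ω) [IsProbabilityMeasure μ]
    (ε₁ Y₂ ε₃ : Ω → ℝ)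
    (hmeas₁ : Measurable ε₁) (hmeas₂ : Measurable Y₂) (hmeas₃ : Measurable ε₃)
    (hFr₁ : ∀ x : ℝ, 0 < x → μ {ω | ε₁ ω ≤ x} = ENNReal.ofReal (Real.exp (-1 / x)))
    (hFr₁0 : μ {ω | ε₁ ω ≤ 0} = 0)
    (hFr₂ : ∀ x : ℝ, 0 < x → μ {ω | Y₂ ω ≤ x} = ENNReal.ofReal (Real.exp (-1 / x)))
    (hFr₂0 : μ {ω | Y₂ ω ≤ 0} = 0)
    (hFr₃ : ∀ x : ℝ, 0 < x → μ {ω | ε₃ ω ≤ x} = ENNReal.ofReal (Real.exp (-1 / x)))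
    (hFr₃0 : μ {ω | ε₃ ω ≤ 0} = 0)
    (hind : iIndepFun ![ε₁, Y₂, ε₃] μ) :
    (∀ x : ℝ, 0 < x →
        μ {ω | max (Y₂ ω) (ε₁ ω) / 2 ≤ x} = ENNReal.ofReal (Real.exp (-1 / x))) ∧
      Tendsto (fun t : ℝ => t *
          (μ {ω | t < max (Y₂ ω) (ε₁ ω) / 2 ∧ t < Y₂ ω}).toReal)
        atTop (nhds (1 / 2)) ∧
      Tendsto (fun t : ℝ => t *
          (μ {ω | t < max (Y₂ ω) (ε₁ ω) / 2 ∧ t < max (Y₂ ω) (ε₃ ω) / 2}).toReal)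
        atTop (nhds (1 / 2)) :=
  markov_tree_counterexample_general μ ε₁ Y₂ ε₃ hmeas₁ hmeas₂ hmeas₃ hFr₁ hFr₂ hFr₃ hind
end
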